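/- arXiv:2303.09436 — 4 statements merged into one kernel-verified Lean document; each statement's English description precedes it below -/
import Mathlib

section
/- For the stuffle product ∗ on ℚ⟨Y^bi⟩ and the generating series ρ(W)_d of words in ℚ⟨Y^bi⟩, for all 0 < n < d one has: ρ(W)(X₁,…,X_n;Y₁,…,Y_n) ∗ ρ(W)(X_{n+1},…,X_d;Y_{n+1},…,Y_d) = ρ(W)(X₁;Y₁)·(ρ(W)(X₂,…,X_n;Y₂,…,Y_n) ∗ ρ(W)(X_{n+1},…,X_d;Y_{n+1},…,Y_d)) + ρ(W)(X_{n+1};Y_{n+1})·(ρ(W)(X₁,…,X_n;Y₁,…,Y_n) ∗ ρ(W)(X_{n+2},…,X_d;Y_{n+2},…,Y_d)) + [(ρ(W)(X₁;Y₁+Y_{n+1}) − ρ(W)(X_{n+1};Y₁+Y_{n+1}))/(X₁−X_{n+1})]·(ρ(W)(X₂,…,X_n;Y₂,…,Y_n) ∗ ρ(W)(X_{n+2},…,X_d;Y_{n+2},…,Y_d)). Here · is the concatenation product extended bilinearly over the power series variables, ∗ is also extended bilinearly, and the difference quotient (A(X₁)−A(X_{n+1}))/(X₁−X_{n+1}) of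 a power series A(X) = Σ_k a_k X^k denotes the power series Σ_k a_k Σ_{i+j=k−1} X₁^i X_{n+1}^j. -/
/-!
STATEMENT 1: the recursive formula for the stuffle product `∗` on the generating
series of words in `ℚ⟨Y^bi⟩`.

`ℚ⟨Y^bi⟩` is realized as the space of finite `ℚ`-linear combinations of words in the
alphabet `Y^bi = {y_{k,m} : k ≥ 1, m ≥ 0}`; the letter `y_{k,m}` is encoded as the
pair `(k-1, m) : ℕ × ℕ`.  Formal power series in the variables
`X₁, X₂, … , Y₁, Y₂, …` with coefficients in `ℚ⟨Y^bi⟩` are realized as functions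
from exponents (finitely supported functions on `ℕ ⊕ ℕ`, `Sum.inl i ↔ X_{i+1}` and
`Sum.inr i ↔ Y_{i+1}`) to `ℚ⟨Y^bi⟩`; products of series are taken coefficientwise
via `Finset.antidiagonal`.
-/

open Finsupp

/-- `ℚ⟨Y^bi⟩`; a word is a list of letters `(a, m) : ℕ × ℕ`, standing for `y_{a+1,m}`. -/
abbrev QY : Type := List (ℕ × ℕ) →₀ ℚ

/-- The word `y_{k₁,m₁} ⋯ y_{k_d,m_d}` (given by its list of encoded letters). -/
noncomputable def wY (w : List (ℕ × ℕ)) : QY := Finsupp.single w 1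

/-- Left concatenation by a letter, extended `ℚ`-linearly. -/
noncomputable def consY (a : ℕ × ℕ) (x : QY) : QY := Finsupp.mapDomain (List.cons a) x

/-- The stuffle product `∗` on words: `y_{k₁,m₁}u ∗ y_{k₂,m₂}v
= y_{k₁,m₁}(u ∗ y_{k₂,m₂}v) + y_{k₂,m₂}(y_{k₁,m₁}u ∗ v) + y_{k₁+k₂,m₁+m₂}(u ∗ v)`.
(In the encoding `(a,m) = y_{a+1,m}` the third letter is `(a₁+a₂+1, m₁+m₂)`.) -/
noncomputable def stufW : List (ℕ × ℕ) → List (ℕ × ℕ) → QY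
  | [], w => wY w
  | x :: u, [] => wY (x :: u)
  | x :: u, y :: v =>
      consY x (stufW u (y :: v)) + consY y (stufW (x :: u) v) +
        consY (x.1 + y.1 + 1, x.2 + y.2) (stufW u v)
  termination_by u v => u.length + v.length

/-- The stuffle product `∗` on `ℚ⟨Y^bi⟩` (ℚ-bilinear extension). -/
noncomputable def stuf (x y : QY) : QY :=
  x.sum fun u a => y.sum fun v b => (a * b) • stufW u v

/-- The concatenation product on `ℚ⟨Y^bi⟩` (ℚ-bilinear extension). -/
noncomputable def concY (x y : QY) : QY :=
  x.sum fun u a => y.sum fun v b => Finsupp.single (u ++ v) (a * b)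

/-- Exponents of monomials in variables `X_{i+1} = Sum.inl i`, `Y_{i+1} = Sum.inr i`. -/
abbrev Expo : Type := (ℕ ⊕ ℕ) →₀ ℕ

/-- The product of two formal power series with coefficients in `ℚ⟨Y^bi⟩`, where the
coefficients are multiplied with the bilinear map `f` (e.g. `stuf` or `concY`). -/
noncomputable def mulSY (f : QY → QY → QY) (F G : Expo → QY) : Expo → QY :=
  fun e => ∑ p ∈ Finset.HasAntidiagonal.antidiagonal e, f (F p.1) (G p.2)

open scoped Classical in
/-- The generating series of words `ρ(W)(X_{i₁+1}, …; Y_{i₁+1}, …)` of `ℚ⟨Y^bi⟩` over the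
(0-indexed) positions in `l`:
`∑ y_{k₁,m₁}⋯y_{k_d,m_d} · X₁^{k₁-1}(Y₁^{m₁}/m₁!) ⋯ X_d^{k_d-1}(Y_d^{m_d}/m_d!)`. -/
noncomputable def genY (l : List ℕ) : Expo → QY := fun e =>
  if ∀ j : ℕ, j ∉ l → e (Sum.inl j) = 0 ∧ e (Sum.inr j) = 0 then
    ((l.map fun i => ((e (Sum.inr i)).factorial : ℚ)).prod)⁻¹ •
      wY (l.map fun i => (e (Sum.inl i), e (Sum.inr i)))
  else 0

open scoped Classical in
/-- The difference quotient
`(ρ(W)(X_{i₁+1}; Y_{j₁+1}+Y_{j₂+1}) - ρ(W)(X_{i₂+1}; Y_{j₁+1}+Y_{j₂+1}))/(X_{i₁+1} - X_{i₂+1})`,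
i.e. the series whose coefficient at `X_{i₁+1}^a X_{i₂+1}^b Y_{j₁+1}^{m₁} Y_{j₂+1}^{m₂}` is
`y_{a+b+2, m₁+m₂}/(m₁! m₂!)`. -/
noncomputable def diffqY (i₁ i₂ j₁ j₂ : ℕ) : Expo → QY := fun e =>
  if ∀ v : ℕ ⊕ ℕ, v ≠ Sum.inl i₁ → v ≠ Sum.inl i₂ → v ≠ Sum.inr j₁ → v ≠ Sum.inr j₂ →
      e v = 0 then
    (((e (Sum.inr j₁)).factorial * (e (Sum.inr j₂)).factorial : ℚ))⁻¹ •
      wY [(e (Sum.inl i₁) + e (Sum.inl i₂) + 1, e (Sum.inr j₁) + e (Sum.inr j₂))]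
  else 0

/-
Each generating series only involves its own variables, so when the two factors of a series
product involve disjoint sets of variables, the product has a single term at each monomial: its
coefficient at `e` is the product of the coefficients at the restrictions of `e`. Comparing
coefficients therefore reduces the identity, letter by letter, to the defining recursion of the
stuffle on words; the third term matches because the letter `y_{k₁+k₂,m₁+m₂}` arises from
`X₁^{k₁-1} X_{n+1}^{k₂-1} Y₁^{m₁} Y_{n+1}^{m₂}/(m₁! m₂!)`, which is exactly the corresponding
coefficient of the difference quotient.
-/

section Support

open scoped Classical

def varIndex : ℕ ⊕ ℕ → ℕ := Sum.elim id id

@[simp] theorem varIndex_inl (i : ℕ) : varIndex (Sum.inl i) = i := rfl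

@[simp] theorem varIndex_inr (i : ℕ) : varIndex (Sum.inr i) = i := rfl

def SupportedOn (s : Set ℕ) (e : Expo) : Prop := ∀ v, varIndex v ∉ s → e v = 0

noncomputable def restrict (s : Set ℕ) (e : Expo) : Expo := e.filter (varIndex · ∈ s)

def SeriesSupportedOn (s : Set ℕ) (F : Expo → QY) : Prop := ∀ e, ¬ SupportedOn s e → F e = 0

variable {s t : Set ℕ} {e p q : Expo}

theorem restrict_apply (v : ℕ ⊕ ℕ) :
    restrict s e v = if varIndex v ∈ s then e v else 0 :=
  Finsupp.filter_apply _ _ _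

theorem supportedOn_restrict : SupportedOn s (restrict s e) := fun v hv => by
  rw [restrict_apply, if_neg hv]

theorem restrict_restrict (h : s ⊆ t) : restrict s (restrict t e) = restrict s e := by
  ext v
  by_cases hs : varIndex v ∈ s
  · simp [restrict_apply, hs, h hs]
  · simp [restrict_apply, hs]

theorem SupportedOn.mono (he : SupportedOn s e) (h : s ⊆ t) : SupportedOn t e :=
  fun v hv => he v fun hs => hv (h hs)

theorem SupportedOn.add (hp : SupportedOn s p) (hq : SupportedOn t q) :
    SupportedOn (s ∪ t) (p + q) := fun v hv => by
  simp only [Set.mem_union, not_or] at hv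
  simp [hp v hv.1, hq v hv.2]

theorem restrict_eq_of_add_eq (hst : Disjoint s t) (hp : SupportedOn s p)
    (hq : SupportedOn t q) (h : p + q = e) : restrict s e = p := by
  ext v
  rw [restrict_apply, ← h]
  by_cases hs : varIndex v ∈ s
  · simp [hs, hq v (Set.disjoint_left.1 hst hs)]
  · simp [hs, hp v hs]

theorem restrict_add_restrict (hst : Disjoint s t) (he : SupportedOn (s ∪ t) e) :
    restrict s e + restrict t e = e := by
  ext v
  by_cases hs : varIndex v ∈ s
  · simp [restrict_apply, hs, Set.disjoint_left.1 hst hs]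
  · by_cases ht : varIndex v ∈ t
    · simp [restrict_apply, hs, ht]
    · simp [restrict_apply, hs, ht, he v (by simp [hs, ht])]

variable {f : QY → QY → QY} {F G : Expo → QY}

theorem SeriesSupportedOn.mono (hF : SeriesSupportedOn s F) (h : s ⊆ t) :
    SeriesSupportedOn t F :=
  fun e he => hF e fun hs => he (hs.mono h)

theorem SeriesSupportedOn.add (hF : SeriesSupportedOn s F) (hG : SeriesSupportedOn s G) :
    SeriesSupportedOn s (F + G) :=
  fun e he => by rw [Pi.add_apply, hF e he, hG e he, add_zero]

theorem SeriesSupportedOn.eq_of_supportedOn (hF : SeriesSupportedOn s F)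
    (hG : SeriesSupportedOn s G) (h : ∀ e, SupportedOn s e → F e = G e) : F = G :=
  funext fun e => by
    by_cases he : SupportedOn s e
    exacts [h e he, (hF e he).trans (hG e he).symm]

theorem SeriesSupportedOn.mulSY (hf₁ : ∀ y, f 0 y = 0) (hf₂ : ∀ x, f x 0 = 0)
    (hF : SeriesSupportedOn s F) (hG : SeriesSupportedOn t G) :
    SeriesSupportedOn (s ∪ t) (mulSY f F G) := fun e he =>
  Finset.sum_eq_zero fun ⟨p, q⟩ hpq => by
    rw [Finset.HasAntidiagonal.mem_antidiagonal] at hpq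
    by_cases hp : SupportedOn s p
    · have hq : ¬ SupportedOn t q := fun hq => he (hpq ▸ hp.add hq)
      rw [hG q hq, hf₂]
    · rw [hF p hp, hf₁]

theorem mulSY_apply_of_supportedOn (hf₁ : ∀ y, f 0 y = 0) (hf₂ : ∀ x, f x 0 = 0)
    (hst : Disjoint s t) (hF : SeriesSupportedOn s F) (hG : SeriesSupportedOn t G)
    (he : SupportedOn (s ∪ t) e) :
    mulSY f F G e = f (F (restrict s e)) (G (restrict t e)) := by
  refine Finset.sum_eq_single (restrict s e, restrict t e) (fun ⟨p, q⟩ hpq hne => ?_) ?_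
  · rw [Finset.HasAntidiagonal.mem_antidiagonal] at hpq
    by_cases hp : SupportedOn s p
    · by_cases hq : SupportedOn t q
      · refine absurd ?_ hne
        rw [restrict_eq_of_add_eq hst hp hq hpq,
          restrict_eq_of_add_eq hst.symm hq hp ((add_comm q p).trans hpq)]
      · rw [hG q hq, hf₂]
    · rw [hF p hp, hf₁]
  · exact fun h => absurd (Finset.HasAntidiagonal.mem_antidiagonal.2
      (restrict_add_restrict hst he)) h

theorem mulSY_apply_restrict (hf₁ : ∀ y, f 0 y = 0) (hf₂ : ∀ x, f x 0 = 0)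
    (hst : Disjoint s t) (hF : SeriesSupportedOn s F) (hG : SeriesSupportedOn t G) :
    mulSY f F G (restrict (s ∪ t) e) = f (F (restrict s e)) (G (restrict t e)) := by
  rw [mulSY_apply_of_supportedOn hf₁ hf₂ hst hF hG supportedOn_restrict,
    restrict_restrict Set.subset_union_left, restrict_restrict Set.subset_union_right]

end Support

theorem seriesSupportedOn_genY (l : List ℕ) : SeriesSupportedOn {i | i ∈ l} (genY l) :=
  fun e he => if_neg fun h => he fun v hv => by
    rcases v with j | j
    exacts [(h j hv).1, (h j hv).2]

theorem genY_restrict (l : List ℕ) (e : Expo) :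
    genY l (restrict {i | i ∈ l} e) =
      ((l.map fun i => ((e (Sum.inr i)).factorial : ℚ)).prod)⁻¹ •
        wY (l.map fun i => (e (Sum.inl i), e (Sum.inr i))) := by
  have hl : ∀ i ∈ l, ∀ v, varIndex v = i → restrict {i | i ∈ l} e v = e v :=
    fun i hi v hv => by rw [restrict_apply, if_pos (hv ▸ hi)]
  rw [genY, if_pos fun j hj => ⟨supportedOn_restrict (Sum.inl j) hj,
    supportedOn_restrict (Sum.inr j) hj⟩]
  congr 2
  · exact congrArg _ (List.map_congr_left fun i hi => by rw [hl i hi _ rfl])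
  · exact List.map_congr_left fun i hi => by rw [hl i hi _ rfl, hl i hi _ rfl]

theorem seriesSupportedOn_diffqY (i j : ℕ) : SeriesSupportedOn {i, j} (diffqY i j i j) :=
  fun e he => if_neg fun h => he fun v hv => by
    refine h v ?_ ?_ ?_ ?_ <;> rintro rfl <;> simp at hv

theorem diffqY_restrict (i j : ℕ) (e : Expo) :
    diffqY i j i j (restrict {i, j} e) =
      (((e (Sum.inr i)).factorial * (e (Sum.inr j)).factorial : ℚ))⁻¹ •
        wY [(e (Sum.inl i) + e (Sum.inl j) + 1, e (Sum.inr i) + e (Sum.inr j))] := by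
  rw [diffqY, if_pos fun v h₁ h₂ h₃ h₄ => supportedOn_restrict v ?_]
  · simp [restrict_apply, varIndex]
  · rcases v with k | k <;> simp_all

theorem stuf_zero_left (y : QY) : stuf 0 y = 0 := by simp [stuf]

theorem stuf_zero_right (x : QY) : stuf x 0 = 0 := by simp [stuf]

theorem concY_zero_left (y : QY) : concY 0 y = 0 := by simp [concY]

theorem concY_zero_right (x : QY) : concY x 0 = 0 := by simp [concY]

theorem stuf_smul_wY (a b : ℚ) (u v : List (ℕ × ℕ)) :
    stuf (a • wY u) (b • wY v) = (a * b) • stufW u v := by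
  simp [stuf, wY]

theorem concY_smul_wY_singleton (a : ℚ) (x : ℕ × ℕ) (z : QY) :
    concY (a • wY [x]) z = a • consY x z := by
  rw [concY, wY, Finsupp.smul_single_one, Finsupp.sum_single_index (by simp), consY,
    Finsupp.mapDomain, Finsupp.smul_sum]
  simp [Finsupp.smul_single]

theorem consY_smul (x : ℕ × ℕ) (a : ℚ) (z : QY) : consY x (a • z) = a • consY x z :=
  Finsupp.mapDomain_smul a z

theorem seriesSupportedOn_mulSY_stuf_genY (u v : List ℕ) :
    SeriesSupportedOn ({k | k ∈ u} ∪ {k | k ∈ v}) (mulSY stuf (genY u) (genY v)) :=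
  (seriesSupportedOn_genY u).mulSY stuf_zero_left stuf_zero_right (seriesSupportedOn_genY v)

theorem mulSY_stuf_genY_cons_apply {i j : ℕ} {u v : List ℕ} (hi : i ∉ u) (hj : j ∉ v)
    (huv : (i :: u).Disjoint (j :: v)) {e : Expo}
    (he : SupportedOn ({k | k ∈ i :: u} ∪ {k | k ∈ j :: v}) e) :
    mulSY stuf (genY (i :: u)) (genY (j :: v)) e =
      mulSY concY (genY [i]) (mulSY stuf (genY u) (genY (j :: v))) e +
      mulSY concY (genY [j]) (mulSY stuf (genY (i :: u)) (genY v)) e +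
      mulSY concY (diffqY i j i j) (mulSY stuf (genY u) (genY v)) e := by
  simp only [List.disjoint_cons_left, List.disjoint_cons_right, List.mem_cons, not_or] at huv
  have disj {s t : Set ℕ} (h : ∀ k ∈ s, k ∈ t → False) : Disjoint s t := Set.disjoint_left.2 h
  have d₀ : Disjoint {k | k ∈ i :: u} {k | k ∈ j :: v} := disj (by simp; grind [List.Disjoint])
  have d₁ : Disjoint {k | k ∈ [i]} ({k | k ∈ u} ∪ {k | k ∈ j :: v}) := disj (by simp; grind)
  have d₂ : Disjoint {k | k ∈ [j]} ({k | k ∈ i :: u} ∪ {k | k ∈ v}) := disj (by simp; grind)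
  have d₃ : Disjoint ({i, j} : Set ℕ) ({k | k ∈ u} ∪ {k | k ∈ v}) := disj (by simp; grind)
  have d₄ : Disjoint {k | k ∈ u} {k | k ∈ j :: v} := disj (by simp; grind [List.Disjoint])
  have d₅ : Disjoint {k | k ∈ i :: u} {k | k ∈ v} := disj (by simp; grind [List.Disjoint])
  have d₆ : Disjoint {k | k ∈ u} {k | k ∈ v} := disj (by simp; grind [List.Disjoint])
  have hY := seriesSupportedOn_genY
  have hst := seriesSupportedOn_mulSY_stuf_genY
  rw [mulSY_apply_of_supportedOn stuf_zero_left stuf_zero_right d₀ (hY _) (hY _) he,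
    mulSY_apply_of_supportedOn concY_zero_left concY_zero_right d₁ (hY _) (hst _ _) (he.mono ?_),
    mulSY_apply_of_supportedOn concY_zero_left concY_zero_right d₂ (hY _) (hst _ _) (he.mono ?_),
    mulSY_apply_of_supportedOn concY_zero_left concY_zero_right d₃ (seriesSupportedOn_diffqY i j)
      (hst _ _) (he.mono ?_),
    mulSY_apply_restrict stuf_zero_left stuf_zero_right d₄ (hY _) (hY _),
    mulSY_apply_restrict stuf_zero_left stuf_zero_right d₅ (hY _) (hY _),
    mulSY_apply_restrict stuf_zero_left stuf_zero_right d₆ (hY _) (hY _)]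
  · simp only [genY_restrict, diffqY_restrict, List.map_cons, List.map_nil, List.prod_cons,
      List.prod_nil, mul_one, stuf_smul_wY, concY_smul_wY_singleton, stufW.eq_3, consY_smul,
      smul_add, smul_smul]
    match_scalars <;> simp only [mul_inv] <;> ring
  all_goals intro k; simp; tauto

theorem mulSY_stuf_genY_cons {i j : ℕ} {u v : List ℕ} (hi : i ∉ u) (hj : j ∉ v)
    (huv : (i :: u).Disjoint (j :: v)) :
    mulSY stuf (genY (i :: u)) (genY (j :: v)) =
      mulSY concY (genY [i]) (mulSY stuf (genY u) (genY (j :: v))) +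
      mulSY concY (genY [j]) (mulSY stuf (genY (i :: u)) (genY v)) +
      mulSY concY (diffqY i j i j) (mulSY stuf (genY u) (genY v)) := by
  have hY := seriesSupportedOn_genY
  have hst := seriesSupportedOn_mulSY_stuf_genY
  refine (hst _ _).eq_of_supportedOn (.add (.add ?_ ?_) ?_)
    fun e he => mulSY_stuf_genY_cons_apply hi hj huv he
  · exact ((hY _).mulSY concY_zero_left concY_zero_right (hst _ _)).mono fun k => by simp; tauto
  · exact ((hY _).mulSY concY_zero_left concY_zero_right (hst _ _)).mono fun k => by simp; tauto
  · exact ((seriesSupportedOn_diffqY i j).mulSY concY_zero_left concY_zero_right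
      (hst _ _)).mono fun k => by simp; tauto

/-- For `0 < n < d`,
`ρ(W)(X₁,…,X_n;Y₁,…,Y_n) ∗ ρ(W)(X_{n+1},…,X_d;Y_{n+1},…,Y_d)`
equals the sum of the three recursive terms. -/
theorem stuffle_gen_series (d n : ℕ) (h0 : 0 < n) (hnd : n < d) :
    mulSY stuf (genY (List.range n)) (genY ((List.range (d - n)).map fun i => n + i))
      =
    mulSY concY (genY [0])
        (mulSY stuf (genY ((List.range (n - 1)).map fun i => 1 + i))
          (genY ((List.range (d - n)).map fun i => n + i)))
      +
    mulSY concY (genY [n])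
        (mulSY stuf (genY (List.range n))
          (genY ((List.range (d - n - 1)).map fun i => (n + 1) + i)))
      +
    mulSY concY (diffqY 0 n 0 n)
        (mulSY stuf (genY ((List.range (n - 1)).map fun i => 1 + i))
          (genY ((List.range (d - n - 1)).map fun i => (n + 1) + i))) := by
  obtain ⟨n, rfl⟩ : ∃ k, n = k + 1 := ⟨n - 1, by omega⟩
  obtain ⟨m, hm⟩ : ∃ m, d - (n + 1) = m + 1 := ⟨d - (n + 1) - 1, by omega⟩
  rw [hm, Nat.add_sub_cancel, Nat.add_sub_cancel, List.range_eq_range']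
  simp only [← List.range'_eq_map_range, List.range'_succ]
  exact mulSY_stuf_genY_cons (by simp) (by simp)
    (by simp [List.disjoint_left, List.mem_range'_1]; omega)
end

section
/- For the deconcatenation coproduct Δ_dec on ℚ⟨B⟩, applied coefficientwise to the generating series ρ(W)_d of words in ℚ⟨B⟩, one has for each d ≥ 0: Δ_dec ρ(W)_d(Y₀; X₁,…,X_d; Y₁,…,Y_d) = Σ_{i=0}^{d} ρ(W)_i(Y₀; X₁,…,X_i; Y₁,…,Y_i) ⊗ ρ(W)_{d−i}(Y_i; X_{i+1},…,X_d; Y_{i+1},…,Y_d), an identity of formal power series with coefficients in ℚ⟨B⟩ ⊗_ℚ ℚ⟨B⟩ (where in the i-th summand the first variable of the second factor is Y_i). -/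
/-!
STATEMENT 4: the deconcatenation coproduct on `ℚ⟨B⟩` applied coefficientwise to the
generating series `ρ(W)_d(Y₀; X₁,…,X_d; Y₁,…,Y_d)` of words in `ℚ⟨B⟩`.

`ℚ⟨B⟩` is realized as the space of finite `ℚ`-linear combinations of words
(lists of `ℕ`, the letter `i` standing for `b_i`).  Formal power series are
functions from exponents; the variable `X_i` is `Sum.inl i` and `Y_i` is `Sum.inr i`
(here `i ≥ 1` for the `X`-variables and `i ≥ 0` for the `Y`-variables).
-/

open Finsupp TensorProduct

/-- `ℚ⟨B⟩`. -/
abbrev QB : Type := List ℕ →₀ ℚ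

/-- The word `b_{s₁} ⋯ b_{s_l}`. -/
noncomputable def wB (w : List ℕ) : QB := Finsupp.single w 1

open scoped Classical in
/-- The generating series of words of `ℚ⟨B⟩`,
`ρ(W)(Y_{y₀}; X_{i}, … ; Y_{i}, …)` over the positions `i ∈ l` with leading
`Y`-variable `Y_{y₀}`:
`∑ b₀^{m₀}b_{k₁}b₀^{m₁}⋯b_{k_d}b₀^{m_d} · Y_{y₀}^{m₀} X_{i₁}^{k₁-1}Y_{i₁}^{m₁} ⋯`. -/
noncomputable def genBfull (y₀ : ℕ) (l : List ℕ) : Expo → QB := fun e =>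
  if (∀ j : ℕ, j ∉ l → e (Sum.inl j) = 0) ∧
      (∀ j : ℕ, j ≠ y₀ → j ∉ l → e (Sum.inr j) = 0) then
    wB (List.replicate (e (Sum.inr y₀)) 0 ++
      (l.map fun i => (e (Sum.inl i) + 1) :: List.replicate (e (Sum.inr i)) 0).flatten)
  else 0

/-- The deconcatenation coproduct `Δ_dec(w) = ∑_{uv=w} u ⊗ v` on `ℚ⟨B⟩`. -/
noncomputable def decB (x : QB) : QB ⊗[ℚ] QB :=
  x.sum fun w a =>
    a • ∑ i ∈ Finset.range (w.length + 1), (wB (w.take i)) ⊗ₜ[ℚ] (wB (w.drop i))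

/-- The coefficientwise tensor product of two formal power series with coefficients in
`ℚ⟨B⟩`. -/
noncomputable def tensSB (F G : Expo → QB) : Expo → QB ⊗[ℚ] QB :=
  fun e => ∑ p ∈ Finset.HasAntidiagonal.antidiagonal e, (F p.1) ⊗ₜ[ℚ] (G p.2)

/-! A cut of the word `b₀^{m₀} b_{k₁} b₀^{m₁} ⋯ b_{k_d} b₀^{m_d}` falls inside exactly one run
`b₀^{m_i}` (just after `b_{k_i}` when `i ≥ 1`), say after `a` of its letters: the two pieces are
the words with coefficient `Y₀^{m₀} ⋯ X_i^{k_i-1} Y_i^a` in `ρ(W)_i` and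
`Y_i^{m_i-a} X_{i+1}^{k_{i+1}-1} ⋯` in `ρ(W)_{d-i}`. Conversely, a splitting `p + q = e` of the exponent contributes to the `i`-th
summand only if `p` lives on `Y₀, X₁, …, Y_i` and `q` on `Y_i, X_{i+1}, …, Y_d`; these two sets
of variables meet only in `Y_i`, so the splitting is determined by `a = p(Y_i)`. -/

namespace List

variable {α M : Type*} [AddCommMonoid M]

def sumCuts (f : List α → List α → M) (w : List α) : M :=
  ∑ c ∈ Finset.range (w.length + 1), f (w.take c) (w.drop c)

theorem sumCuts_append_cons (f : List α → List α → M) (u : List α) (x : α) (v : List α) :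
    sumCuts f (u ++ x :: v)
      = sumCuts (fun p q => f p (q ++ x :: v)) u + sumCuts (fun p q => f (u ++ x :: p) q) v := by
  have hlen : (u ++ x :: v).length + 1 = (u.length + 1) + (v.length + 1) := by
    simp only [length_append, length_cons]; omega
  rw [sumCuts, hlen, Finset.sum_range_add]
  congr 1
  · refine Finset.sum_congr rfl fun c hc => ?_
    have hc : c - u.length = 0 := by rw [Finset.mem_range] at hc; omega
    simp [take_append, drop_append, hc]
  · refine Finset.sum_congr rfl fun a ha => ?_
    have ha : a ≤ v.length := by rw [Finset.mem_range] at ha; omega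
    rw [take_append, drop_append, show u.length + 1 + a - u.length = a + 1 by omega,
      take_of_length_le (by omega), drop_eq_nil_of_le (by omega)]
    rfl

theorem sumCuts_replicate (f : List α → List α → M) (n : ℕ) (x : α) :
    sumCuts f (replicate n x)
      = ∑ a ∈ Finset.range (n + 1), f (replicate a x) (replicate (n - a) x) := by
  refine Finset.sum_congr (by rw [length_replicate]) fun a ha => ?_
  rw [take_replicate, drop_replicate, min_eq_left (by rw [Finset.mem_range] at ha; omega)]

end List

theorem decB_wB (w : List ℕ) : decB (wB w) = w.sumCuts fun u v => wB u ⊗ₜ[ℚ] wB v :=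
  (Finsupp.sum_single_index (by rw [zero_smul])).trans (one_smul _ _)

/-- The word `b₀^{m₀} b_{k₁} b₀^{m₁} ⋯` whose monomial in `genBfull y₀ l` is `e`. -/
def monomialWord (e : Expo) (y₀ : ℕ) (l : List ℕ) : List ℕ :=
  List.replicate (e (Sum.inr y₀)) 0 ++
    (l.map fun i => (e (Sum.inl i) + 1) :: List.replicate (e (Sum.inr i)) 0).flatten

theorem monomialWord_nil (e : Expo) (y₀ : ℕ) :
    monomialWord e y₀ [] = List.replicate (e (Sum.inr y₀)) 0 := by
  simp [monomialWord]

theorem monomialWord_cons (e : Expo) (y₀ s : ℕ) (l : List ℕ) :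
    monomialWord e y₀ (s :: l)
      = List.replicate (e (Sum.inr y₀)) 0 ++ (e (Sum.inl s) + 1) :: monomialWord e s l := by
  simp [monomialWord]

theorem monomialWord_congr {e e' : Expo} {y₀ : ℕ} {l : List ℕ}
    (hX : ∀ j ∈ l, e (Sum.inl j) = e' (Sum.inl j))
    (hY : ∀ j ∈ y₀ :: l, e (Sum.inr j) = e' (Sum.inr j)) :
    monomialWord e y₀ l = monomialWord e' y₀ l := by
  rw [monomialWord, monomialWord, hY y₀ List.mem_cons_self]
  congr 2
  refine List.map_congr_left fun j hj => ?_
  rw [hX j hj, hY j (List.mem_cons_of_mem _ hj)]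

theorem sumCuts_monomialWord {M : Type*} [AddCommMonoid M] (f : List ℕ → List ℕ → M)
    (e : Expo) (s n : ℕ) :
    (monomialWord e s (List.range' (s + 1) n)).sumCuts f
      = ∑ i ∈ Finset.range (n + 1), ∑ a ∈ Finset.range (e (Sum.inr (s + i)) + 1),
          f (monomialWord (e.update (Sum.inr (s + i)) a) s (List.range' (s + 1) i))
            (monomialWord (e.update (Sum.inr (s + i)) (e (Sum.inr (s + i)) - a)) (s + i)
              (List.range' (s + i + 1) (n - i))) := by
  induction n generalizing s f with
  | zero => simp [monomialWord_nil, List.sumCuts_replicate, Finsupp.update_apply]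
  | succ n ih =>
    rw [List.range'_succ, monomialWord_cons, List.sumCuts_append_cons, List.sumCuts_replicate,
      ih, add_comm]
    conv_rhs => rw [Finset.sum_range_succ']
    congr 1
    · refine Finset.sum_congr rfl fun i _ => ?_
      rw [show s + (i + 1) = s + 1 + i by omega, show n + 1 - (i + 1) = n - i by omega]
      refine Finset.sum_congr rfl fun a _ => ?_
      rw [List.range'_succ, monomialWord_cons]
      simp [Finsupp.update_apply, show s ≠ s + 1 + i by omega]
    · refine Finset.sum_congr rfl fun a _ => ?_
      have hW : monomialWord (e.update (Sum.inr s) (e (Sum.inr s) - a)) (s + 1)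
          (List.range' (s + 1 + 1) n) = monomialWord e (s + 1) (List.range' (s + 1 + 1) n) :=
        monomialWord_congr (fun j _ => by simp [Finsupp.update_apply])
          (fun j hj => by
            rw [List.mem_cons, List.mem_range'_1] at hj
            rw [Finsupp.update_apply, if_neg (by rw [Sum.inr.injEq]; omega)])
      simp [monomialWord_nil, List.range'_succ, monomialWord_cons, Finsupp.update_apply, hW]

/-- The condition under which `genBfull y₀ l` has a nonzero coefficient at `e`. -/
def ExpoSupported (y₀ : ℕ) (l : List ℕ) (e : Expo) : Prop :=
  (∀ j : ℕ, j ∉ l → e (Sum.inl j) = 0) ∧ (∀ j : ℕ, j ≠ y₀ → j ∉ l → e (Sum.inr j) = 0)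

theorem genBfull_of_expoSupported {y₀ : ℕ} {l : List ℕ} {e : Expo} (h : ExpoSupported y₀ l e) :
    genBfull y₀ l e = wB (monomialWord e y₀ l) :=
  if_pos h

theorem genBfull_of_not_expoSupported {y₀ : ℕ} {l : List ℕ} {e : Expo}
    (h : ¬ ExpoSupported y₀ l e) : genBfull y₀ l e = 0 :=
  if_neg h

theorem expoSupported_range'_iff {y n : ℕ} {e : Expo} :
    ExpoSupported y (List.range' (y + 1) n) e ↔
      ∀ j, (e (Sum.inl j) ≠ 0 → y < j ∧ j ≤ y + n) ∧ (e (Sum.inr j) ≠ 0 → y ≤ j ∧ j ≤ y + n) := by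
  simp only [ExpoSupported, List.mem_range'_1]
  constructor
  · rintro ⟨hX, hY⟩ j
    exact ⟨fun h => by by_contra h'; exact h (hX j (by omega)),
      fun h => by by_contra h'; exact h (hY j (by omega) (by omega))⟩
  · intro h
    exact ⟨fun j hj => by by_contra h'; have := (h j).1 h'; omega,
      fun j hj hj' => by by_contra h'; have := (h j).2 h'; omega⟩

theorem ExpoSupported.add {p q : Expo} {i d : ℕ} (hi : i ≤ d)
    (hp : ExpoSupported 0 (List.range' 1 i) p)
    (hq : ExpoSupported i (List.range' (i + 1) (d - i)) q) :
    ExpoSupported 0 (List.range' 1 d) (p + q) := by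
  rw [expoSupported_range'_iff (y := 0)] at hp ⊢
  rw [expoSupported_range'_iff] at hq
  intro j
  have := hp j
  have := hq j
  simp only [Finsupp.add_apply]
  omega

open scoped Classical in
/-- `e = expoLeft e i a + expoRight e i a` is the splitting of `e` between the two factors of the
`i`-th summand in which `Y_i^a` goes to the left. -/
noncomputable def expoLeft (e : Expo) (i a : ℕ) : Expo :=
  (e.filter fun x => Sum.elim (· ≤ i) (· < i) x).update (Sum.inr i) a

open scoped Classical in
noncomputable def expoRight (e : Expo) (i a : ℕ) : Expo :=
  (e.filter fun x => Sum.elim (i < ·) (i < ·) x).update (Sum.inr i) (e (Sum.inr i) - a)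

theorem expoLeft_inl (e : Expo) (i a j : ℕ) :
    expoLeft e i a (Sum.inl j) = if j ≤ i then e (Sum.inl j) else 0 := by
  by_cases h : j ≤ i <;> simp [expoLeft, Finsupp.update_apply, Finsupp.filter_apply, h]

theorem expoLeft_inr (e : Expo) (i a j : ℕ) :
    expoLeft e i a (Sum.inr j) = if j = i then a else if j < i then e (Sum.inr j) else 0 := by
  by_cases h₁ : j = i
  · simp [expoLeft, Finsupp.update_apply, h₁]
  · by_cases h₂ : j < i <;> simp [expoLeft, Finsupp.update_apply, Finsupp.filter_apply, h₁, h₂]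

theorem expoRight_inl (e : Expo) (i a j : ℕ) :
    expoRight e i a (Sum.inl j) = if i < j then e (Sum.inl j) else 0 := by
  by_cases h : i < j <;> simp [expoRight, Finsupp.update_apply, Finsupp.filter_apply, h]

theorem expoRight_inr (e : Expo) (i a j : ℕ) :
    expoRight e i a (Sum.inr j)
      = if j = i then e (Sum.inr i) - a else if i < j then e (Sum.inr j) else 0 := by
  by_cases h₁ : j = i
  · simp [expoRight, Finsupp.update_apply, h₁]
  · by_cases h₂ : i < j <;> simp [expoRight, Finsupp.update_apply, Finsupp.filter_apply, h₁, h₂]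

theorem expoLeft_add_expoRight (e : Expo) {i a : ℕ} (ha : a ≤ e (Sum.inr i)) :
    expoLeft e i a + expoRight e i a = e := by
  ext (j | j)
  · simp only [Finsupp.add_apply, expoLeft_inl, expoRight_inl]
    split_ifs <;> omega
  · simp only [Finsupp.add_apply, expoLeft_inr, expoRight_inr]
    split_ifs <;> subst_vars <;> omega

theorem eq_expoLeft_expoRight {p q e : Expo} {i n : ℕ} (hpq : p + q = e)
    (hp : ExpoSupported 0 (List.range' 1 i) p) (hq : ExpoSupported i (List.range' (i + 1) n) q) :
    p = expoLeft e i (p (Sum.inr i)) ∧ q = expoRight e i (p (Sum.inr i)) := by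
  rw [expoSupported_range'_iff (y := 0)] at hp
  rw [expoSupported_range'_iff] at hq
  have hsum x : p x + q x = e x := by rw [← hpq, Finsupp.add_apply]
  constructor <;> ext (j | j) <;>
    simp only [expoLeft_inl, expoLeft_inr, expoRight_inl, expoRight_inr] <;>
    have := hp j <;> have := hq j <;> have := hsum (Sum.inl j) <;> have := hsum (Sum.inr j) <;>
    split_ifs <;> subst_vars <;> omega

theorem expoSupported_expoLeft {e : Expo} {d : ℕ} (he : ExpoSupported 0 (List.range' 1 d) e)
    (i a : ℕ) : ExpoSupported 0 (List.range' 1 i) (expoLeft e i a) := by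
  rw [expoSupported_range'_iff (y := 0)] at he ⊢
  intro j
  have := he j
  simp only [expoLeft_inl, expoLeft_inr]
  split_ifs <;> omega

theorem expoSupported_expoRight {e : Expo} {d : ℕ} (he : ExpoSupported 0 (List.range' 1 d) e)
    (i a : ℕ) : ExpoSupported i (List.range' (i + 1) (d - i)) (expoRight e i a) := by
  rw [expoSupported_range'_iff (y := 0)] at he
  rw [expoSupported_range'_iff]
  intro j
  have := he j
  simp only [expoRight_inl, expoRight_inr]
  split_ifs <;> omega

theorem tensSB_genBfull_of_expoSupported {e : Expo} {d : ℕ}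
    (he : ExpoSupported 0 (List.range' 1 d) e) (i : ℕ) :
    tensSB (genBfull 0 (List.range' 1 i)) (genBfull i (List.range' (i + 1) (d - i))) e
      = ∑ a ∈ Finset.range (e (Sum.inr i) + 1),
          wB (monomialWord (e.update (Sum.inr i) a) 0 (List.range' 1 i)) ⊗ₜ[ℚ]
            wB (monomialWord (e.update (Sum.inr i) (e (Sum.inr i) - a)) i
              (List.range' (i + 1) (d - i))) := by
  set split : ℕ → Expo × Expo := fun a => (expoLeft e i a, expoRight e i a)
  have hsplit : (Finset.range (e (Sum.inr i) + 1)).image split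
      ⊆ Finset.HasAntidiagonal.antidiagonal e := by
    simp only [Finset.subset_iff, Finset.mem_image, Finset.mem_range,
      Finset.HasAntidiagonal.mem_antidiagonal]
    rintro _ ⟨a, ha, rfl⟩
    exact expoLeft_add_expoRight e (by omega)
  have hzero : ∀ pq ∈ Finset.HasAntidiagonal.antidiagonal e,
      pq ∉ (Finset.range (e (Sum.inr i) + 1)).image split →
        genBfull 0 (List.range' 1 i) pq.1 ⊗ₜ[ℚ] genBfull i (List.range' (i + 1) (d - i)) pq.2
          = 0 := by
    rintro ⟨p, q⟩ hpq hnot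
    rw [Finset.HasAntidiagonal.mem_antidiagonal] at hpq
    by_cases hp : ExpoSupported 0 (List.range' 1 i) p
    · by_cases hq : ExpoSupported i (List.range' (i + 1) (d - i)) q
      · obtain ⟨hp', hq'⟩ := eq_expoLeft_expoRight hpq hp hq
        refine absurd (Finset.mem_image.mpr ⟨p (Sum.inr i), ?_, ?_⟩) hnot
        · have := congrArg (· (Sum.inr i)) hpq
          simp only [Finsupp.add_apply] at this
          exact Finset.mem_range.mpr (by omega)
        · exact (Prod.ext hp' hq').symm
      · rw [genBfull_of_not_expoSupported hq, tmul_zero]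
    · rw [genBfull_of_not_expoSupported hp, zero_tmul]
  have hinj : Set.InjOn split (Finset.range (e (Sum.inr i) + 1)) := fun a _ b _ hab => by
    simpa [split, expoLeft_inr] using congrArg (fun pq : Expo × Expo => pq.1 (Sum.inr i)) hab
  rw [tensSB, ← Finset.sum_subset hsplit hzero, Finset.sum_image hinj]
  refine Finset.sum_congr rfl fun a _ => ?_
  rw [genBfull_of_expoSupported (expoSupported_expoLeft he i a),
    genBfull_of_expoSupported (expoSupported_expoRight he i a)]
  congr 2 <;> refine monomialWord_congr (fun j hj => ?_) (fun j hj => ?_) <;>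
    simp only [List.mem_cons, List.mem_range'_1] at hj <;>
    simp only [expoLeft_inl, expoLeft_inr, expoRight_inl, expoRight_inr, Finsupp.update_apply,
      Sum.inr.injEq, reduceCtorEq, if_false] <;>
    split_ifs <;> omega

theorem tensSB_genBfull_of_not_expoSupported {e : Expo} {d i : ℕ}
    (he : ¬ ExpoSupported 0 (List.range' 1 d) e) (hi : i ≤ d) :
    tensSB (genBfull 0 (List.range' 1 i)) (genBfull i (List.range' (i + 1) (d - i))) e = 0 := by
  refine Finset.sum_eq_zero fun ⟨p, q⟩ hpq => ?_
  rw [Finset.HasAntidiagonal.mem_antidiagonal] at hpq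
  by_cases hp : ExpoSupported 0 (List.range' 1 i) p
  · by_cases hq : ExpoSupported i (List.range' (i + 1) (d - i)) q
    · exact absurd (hpq ▸ hp.add hi hq) he
    · rw [genBfull_of_not_expoSupported hq, tmul_zero]
  · rw [genBfull_of_not_expoSupported hp, zero_tmul]

/-- For each `d ≥ 0`,
`Δ_dec ρ(W)_d(Y₀; X₁,…,X_d; Y₁,…,Y_d)
 = ∑_{i=0}^{d} ρ(W)_i(Y₀; X₁,…,X_i; Y₁,…,Y_i) ⊗ ρ(W)_{d-i}(Y_i; X_{i+1},…,X_d; Y_{i+1},…,Y_d)`. -/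
theorem dec_gen_series_B (d : ℕ) (e : Expo) :
    decB (genBfull 0 ((List.range d).map fun j => 1 + j) e)
      = ∑ i ∈ Finset.range (d + 1),
          tensSB (genBfull 0 ((List.range i).map fun j => 1 + j))
            (genBfull i ((List.range (d - i)).map fun j => (i + 1) + j)) e := by
  simp only [← List.range'_eq_map_range]
  by_cases he : ExpoSupported 0 (List.range' 1 d) e
  · have hcuts := sumCuts_monomialWord (fun u v => wB u ⊗ₜ[ℚ] wB v) e 0 d
    simp only [zero_add] at hcuts
    rw [genBfull_of_expoSupported he, decB_wB, hcuts]
    exact Finset.sum_congr rfl fun i _ => (tensSB_genBfull_of_expoSupported he i).symm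
  · rw [genBfull_of_not_expoSupported he, decB, Finsupp.sum_zero_index]
    exact (Finset.sum_eq_zero fun i hi =>
      tensSB_genBfull_of_not_expoSupported he (Nat.lt_succ_iff.mp (Finset.mem_range.mp hi))).symm
end

section
/- Let T be a formal variable and extend the balanced quasi-shuffle product ∗_b ℚ[T]-bilinearly to ℚ⟨B⟩⁰[T]. The ℚ-linear map reg_T : ℚ⟨B⟩⁰[T] → ℚ⟨B⟩ sending wT^n to w ∗_b b₀^{∗_b n} (the n-fold ∗_b-power of b₀) is bijective and is an algebra isomorphism for the balanced quasi-shuffle product, i.e. reg_T(P ∗_b Q) = reg_T(P) ∗_b reg_T(Q) for all P, Q ∈ ℚ⟨B⟩⁰[T] and reg_T(𝟏) = 𝟏. -/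
/-!
STATEMENT 5: the regularization map `reg_T : ℚ⟨B⟩⁰[T] → ℚ⟨B⟩`, `wT^n ↦ w ∗_b b₀^{∗_b n}`,
is an algebra isomorphism for the balanced quasi-shuffle product `∗_b`.

`ℚ⟨B⟩` is realized as the space of finite `ℚ`-linear combinations of words
(lists of `ℕ`, the letter `i` standing for `b_i`); `ℚ⟨B⟩⁰[T]` is realized as the
space of finitely supported maps `ℕ →₀ ℚ⟨B⟩` (the coefficients of `T^n`) all of whose
values lie in `ℚ⟨B⟩⁰`.
-/

open Finsupp

/-- Left concatenation by the letter `b_a`, extended `ℚ`-linearly. -/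
noncomputable def consB (a : ℕ) (x : QB) : QB := Finsupp.mapDomain (List.cons a) x

/-- The balanced quasi-shuffle product `∗_b` on words. -/
noncomputable def bshW : List ℕ → List ℕ → QB
  | [], w => wB w
  | i :: u, [] => wB (i :: u)
  | i :: u, j :: v =>
      consB i (bshW u (j :: v)) + consB j (bshW (i :: u) v) +
        (if 1 ≤ i ∧ 1 ≤ j then consB (i + j) (bshW u v) else 0)
  termination_by u v => u.length + v.length

/-- The balanced quasi-shuffle product `∗_b` on `ℚ⟨B⟩` (ℚ-bilinear extension). -/
noncomputable def bsh (x y : QB) : QB :=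
  x.sum fun u a => y.sum fun v b => (a * b) • bshW u v

/-- `ℚ⟨B⟩⁰`: the subspace of `ℚ⟨B⟩` spanned by `𝟏` and the words not starting in `b₀`. -/
noncomputable def QB0 : Submodule ℚ QB :=
  Submodule.span ℚ {x | ∃ w : List ℕ, w.head? ≠ some 0 ∧ x = wB w}

/-- The `n`-fold `∗_b`-power `b₀^{∗_b n}` of the letter `b₀`. -/
noncomputable def bpow : ℕ → QB
  | 0 => wB []
  | n + 1 => bsh (bpow n) (wB [0])

/-- The regularization map `reg_T : ℚ⟨B⟩⁰[T] → ℚ⟨B⟩`, `w T^n ↦ w ∗_b b₀^{∗_b n}`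
(extended `ℚ`-linearly); a polynomial in `T` with coefficients in `ℚ⟨B⟩` is encoded
as a finitely supported map `ℕ →₀ ℚ⟨B⟩`. -/
noncomputable def regT (P : ℕ →₀ QB) : QB := P.sum fun n x => bsh x (bpow n)

/-- The `ℚ[T]`-bilinear extension of `∗_b` to polynomials in `T` with coefficients in
`ℚ⟨B⟩`. -/
noncomputable def bshP (P Q : ℕ →₀ QB) : ℕ →₀ QB :=
  P.sum fun i x => Q.sum fun j y => Finsupp.single (i + j) (bsh x y)

/-! ### infrastructure -/

lemma consB_zero (a : ℕ) : consB a 0 = 0 := Finsupp.mapDomain_zero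
lemma consB_add (a : ℕ) (x y : QB) : consB a (x + y) = consB a x + consB a y :=
  Finsupp.mapDomain_add
lemma consB_smul (a : ℕ) (c : ℚ) (x : QB) : consB a (c • x) = c • consB a x :=
  Finsupp.mapDomain_smul c x
lemma consB_wB (a : ℕ) (w : List ℕ) : consB a (wB w) = wB (a :: w) :=
  Finsupp.mapDomain_single

lemma cons_injective (a : ℕ) : Function.Injective (List.cons a) := by
  intro x y h; exact (List.cons.injEq a x a y ▸ h).2

lemma consB_apply_cons (a : ℕ) (x : QB) (w : List ℕ) :
    consB a x (a :: w) = x w := Finsupp.mapDomain_apply (cons_injective a) x w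

lemma consB_apply_cons_ne (a b : ℕ) (hab : a ≠ b) (x : QB) (w : List ℕ) :
    consB a x (b :: w) = 0 := by
  apply Finsupp.mapDomain_notin_range
  rintro ⟨t, ht⟩; exact hab (List.cons.injEq a t b w ▸ ht).1

lemma consB_apply_nil (a : ℕ) (x : QB) : consB a x [] = 0 := by
  apply Finsupp.mapDomain_notin_range
  rintro ⟨t, ht⟩; exact List.cons_ne_nil a t ht

lemma bshW_nil_left (w : List ℕ) : bshW [] w = wB w := by cases w <;> rw [bshW]
lemma bshW_nil_right (u : List ℕ) : bshW u [] = wB u := by cases u <;> rw [bshW]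
lemma bshW_cons (i j : ℕ) (u v : List ℕ) :
    bshW (i :: u) (j :: v) =
      consB i (bshW u (j :: v)) + consB j (bshW (i :: u) v) +
        (if 1 ≤ i ∧ 1 ≤ j then consB (i + j) (bshW u v) else 0) := by
  rw [bshW]

lemma bsh_wB_wB (u v : List ℕ) : bsh (wB u) (wB v) = bshW u v := by
  unfold bsh wB
  rw [Finsupp.sum_single_index, Finsupp.sum_single_index] <;> simp

lemma bsh_zero_left (y : QB) : bsh 0 y = 0 := by
  unfold bsh; exact Finsupp.sum_zero_index

lemma bsh_zero_right (x : QB) : bsh x 0 = 0 := by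
  unfold bsh; simp [Finsupp.sum_zero_index]

lemma bsh_add_left (x y z : QB) : bsh (x + y) z = bsh x z + bsh y z := by
  unfold bsh
  rw [Finsupp.sum_add_index] <;> simp [add_mul, add_smul, Finsupp.sum_add]

lemma bsh_add_right (x y z : QB) : bsh x (y + z) = bsh x y + bsh x z := by
  unfold bsh
  rw [← Finsupp.sum_add]
  apply Finsupp.sum_congr
  intro u _
  rw [Finsupp.sum_add_index] <;> simp [mul_add, add_smul]

lemma bsh_smul_left (c : ℚ) (x y : QB) : bsh (c • x) y = c • bsh x y := by
  unfold bsh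
  rw [Finsupp.sum_smul_index, Finsupp.smul_sum]
  · apply Finsupp.sum_congr
    intro u _
    rw [Finsupp.smul_sum]
    apply Finsupp.sum_congr
    intro v _
    rw [smul_smul, mul_assoc]
  · intro u; simp [Finsupp.sum_zero_index]

lemma bsh_smul_right (c : ℚ) (x y : QB) : bsh x (c • y) = c • bsh x y := by
  unfold bsh
  rw [Finsupp.smul_sum]
  apply Finsupp.sum_congr
  intro u _
  rw [Finsupp.sum_smul_index, Finsupp.smul_sum]
  · apply Finsupp.sum_congr
    intro v _
    rw [smul_smul, mul_left_comm]
  · intro v; simp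

lemma bsh_one_right (x : QB) : bsh x (wB []) = x := by
  unfold bsh
  have : ∀ u (a : ℚ), ((wB []).sum fun v b => (a * b) • bshW u v) = Finsupp.single u a := by
    intro u a
    rw [wB, Finsupp.sum_single_index (by simp), mul_one, bshW_nil_right, wB,
      Finsupp.smul_single, smul_eq_mul, mul_one]
  rw [Finsupp.sum_congr fun u _ => this u (x u)]
  exact Finsupp.sum_single x

lemma bsh_one_left (x : QB) : bsh (wB []) x = x := by
  unfold bsh
  rw [wB, Finsupp.sum_single_index (by simp [Finsupp.sum_zero_index])]
  simp only [one_mul, bshW_nil_left]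
  have : ∀ v (b : ℚ), b • wB v = Finsupp.single v b := by
    intro v b; rw [wB, Finsupp.smul_single, smul_eq_mul, mul_one]
  rw [Finsupp.sum_congr fun v _ => this v (x v)]
  exact Finsupp.sum_single x

lemma bshW_comm : ∀ u v : List ℕ, bshW u v = bshW v u
  | [], v => by rw [bshW_nil_left, bshW_nil_right]
  | i :: u, [] => by rw [bshW_nil_left, bshW_nil_right]
  | i :: u, j :: v => by
      rw [bshW_cons, bshW_cons, bshW_comm u (j :: v), bshW_comm (i :: u) v,
        bshW_comm u v, Nat.add_comm i j]
      rw [show (if 1 ≤ i ∧ 1 ≤ j then consB (j + i) (bshW v u) else 0) =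
        (if 1 ≤ j ∧ 1 ≤ i then consB (j + i) (bshW v u) else 0) from
          if_congr and_comm rfl rfl]
      abel
  termination_by u v => u.length + v.length

lemma bsh_comm (x y : QB) : bsh x y = bsh y x := by
  unfold bsh
  rw [Finsupp.sum_comm]
  apply Finsupp.sum_congr; intro v _
  apply Finsupp.sum_congr; intro u _
  rw [mul_comm, bshW_comm]


lemma smul_ite_zero' (c : ℚ) (p : Prop) [Decidable p] (z : QB) :
    c • (if p then z else 0) = if p then c • z else 0 := by
  split_ifs <;> simp

lemma bsh_consB_cons (a k : ℕ) (w' : List ℕ) (x : QB) :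
    bsh (consB a x) (wB (k :: w')) =
      consB a (bsh x (wB (k :: w'))) + consB k (bsh (consB a x) (wB w')) +
        (if 1 ≤ a ∧ 1 ≤ k then consB (a + k) (bsh x (wB w')) else 0) := by
  induction x using Finsupp.induction_linear with
  | zero => simp [consB_zero, bsh_zero_left, bsh_zero_right]
  | add x y hx hy =>
      by_cases h : 1 ≤ a ∧ 1 ≤ k
      · simp only [if_pos h] at hx hy ⊢
        rw [consB_add, bsh_add_left, hx, hy, bsh_add_left, consB_add,
          bsh_add_left, consB_add, bsh_add_left, consB_add]
        abel
      · simp only [if_neg h, add_zero] at hx hy ⊢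
        rw [consB_add, bsh_add_left, hx, hy, bsh_add_left, consB_add,
          bsh_add_left, consB_add]
        abel
  | single w b =>
      have hs : (Finsupp.single w b : QB) = b • wB w := by
        rw [wB, Finsupp.smul_single, smul_eq_mul, mul_one]
      simp only [hs, consB_smul, bsh_smul_left, consB_wB, bsh_wB_wB]
      rw [bshW_cons, smul_add, smul_add, smul_ite_zero']

lemma bsh_ite_left (p : Prop) [Decidable p] (z y : QB) :
    bsh (if p then z else 0) y = if p then bsh z y else 0 := by
  split_ifs <;> simp [bsh_zero_left]

lemma bsh_ite_right (p : Prop) [Decidable p] (x z : QB) :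
    bsh x (if p then z else 0) = if p then bsh x z else 0 := by
  split_ifs <;> simp [bsh_zero_right]

lemma consB_ite (a : ℕ) (p : Prop) [Decidable p] (z : QB) :
    consB a (if p then z else 0) = if p then consB a z else 0 := by
  split_ifs <;> simp [consB_zero]

lemma ite_add' (p : Prop) [Decidable p] (x y : QB) :
    (if p then x + y else 0) = (if p then x else 0) + (if p then y else 0) := by
  split_ifs <;> simp

lemma bsh_cons_consB (a : ℕ) (u : List ℕ) (c : ℕ) (y : QB) :
    bsh (wB (a :: u)) (consB c y) =
      consB a (bsh (wB u) (consB c y)) + consB c (bsh (wB (a :: u)) y) +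
        (if 1 ≤ a ∧ 1 ≤ c then consB (a + c) (bsh (wB u) y) else 0) := by
  rw [bsh_comm, bsh_consB_cons, bsh_comm y (wB (a :: u)), bsh_comm (consB c y) (wB u),
    bsh_comm y (wB u), Nat.add_comm c a,
    show (if 1 ≤ c ∧ 1 ≤ a then consB (a + c) (bsh (wB u) y) else 0) =
      (if 1 ≤ a ∧ 1 ≤ c then consB (a + c) (bsh (wB u) y) else 0) from
      if_congr and_comm rfl rfl]
  abel

lemma bshW_assoc : ∀ u v w : List ℕ, bsh (bshW u v) (wB w) = bsh (wB u) (bshW v w)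
  | [], v, w => by rw [bshW_nil_left, bsh_wB_wB, bsh_one_left]
  | i :: u, [], w => by rw [bshW_nil_right, bshW_nil_left, bsh_wB_wB]
  | i :: u, j :: v, [] => by rw [bshW_nil_right, bsh_one_right, bsh_wB_wB]
  | i :: u, j :: v, k :: w => by
      have e1 : consB i (bsh (wB u) (bshW (j :: v) (k :: w))) =
          consB i (bsh (wB u) (consB j (bshW v (k :: w)))) +
          consB i (bsh (wB u) (consB k (bshW (j :: v) w))) +
          (if 1 ≤ j ∧ 1 ≤ k then consB i (bsh (wB u) (consB (j + k) (bshW v w))) else 0) := by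
        rw [bshW_cons j k, bsh_add_right, bsh_add_right, bsh_ite_right,
          consB_add, consB_add, consB_ite]
      have e3 : consB k (bsh (wB (i :: u)) (bshW (j :: v) w)) =
          consB k (bsh (consB i (bshW u (j :: v))) (wB w)) +
          consB k (bsh (consB j (bshW (i :: u) v)) (wB w)) +
          (if 1 ≤ i ∧ 1 ≤ j then consB k (bsh (consB (i + j) (bshW u v)) (wB w)) else 0) := by
        rw [← bshW_assoc (i :: u) (j :: v) w, bshW_cons i j, bsh_add_left, bsh_add_left,
          bsh_ite_left, consB_add, consB_add, consB_ite]
      have e7 : (if 1 ≤ i ∧ 1 ≤ j then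
            (if 1 ≤ i + j ∧ 1 ≤ k then consB (i + j + k) (bsh (wB u) (bshW v w)) else 0)
            else 0) =
          (if 1 ≤ j ∧ 1 ≤ k then
            (if 1 ≤ i ∧ 1 ≤ j + k then consB (i + (j + k)) (bsh (wB u) (bshW v w)) else 0)
            else 0) := by
        rw [← Nat.add_assoc]
        split_ifs <;> first | rfl | omega
      calc bsh (bshW (i :: u) (j :: v)) (wB (k :: w))
          = consB i (bsh (wB u) (bshW (j :: v) (k :: w))) +
            consB j (bsh (wB (i :: u)) (bshW v (k :: w))) +
            consB k (bsh (wB (i :: u)) (bshW (j :: v) w)) +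
            (if 1 ≤ i ∧ 1 ≤ j then consB (i + j) (bsh (wB u) (bshW v (k :: w))) else 0) +
            (if 1 ≤ i ∧ 1 ≤ k then consB (i + k) (bsh (wB u) (bshW (j :: v) w)) else 0) +
            (if 1 ≤ j ∧ 1 ≤ k then consB (j + k) (bsh (wB (i :: u)) (bshW v w)) else 0) +
            (if 1 ≤ i ∧ 1 ≤ j then
              (if 1 ≤ i + j ∧ 1 ≤ k then consB (i + j + k) (bsh (wB u) (bshW v w)) else 0)
              else 0) := by
            rw [bshW_cons i j, bsh_add_left, bsh_add_left, bsh_ite_left,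
              bsh_consB_cons i k w (bshW u (j :: v)),
              bsh_consB_cons j k w (bshW (i :: u) v),
              bsh_consB_cons (i + j) k w (bshW u v),
              ite_add', ite_add',
              bshW_assoc u (j :: v) (k :: w), bshW_assoc (i :: u) v (k :: w),
              bshW_assoc u (j :: v) w, bshW_assoc (i :: u) v w,
              bshW_assoc u v (k :: w), bshW_assoc u v w, e3]
            abel
        _ = bsh (wB (i :: u)) (bshW (j :: v) (k :: w)) := by
            rw [e1, e7, bshW_cons j k, bsh_add_right, bsh_add_right, bsh_ite_right,
              bsh_cons_consB i u j (bshW v (k :: w)),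
              bsh_cons_consB i u k (bshW (j :: v) w),
              bsh_cons_consB i u (j + k) (bshW v w),
              ite_add', ite_add']
            abel
  termination_by u v w => u.length + v.length + w.length

lemma bsh_assoc (x y z : QB) : bsh (bsh x y) z = bsh x (bsh y z) := by
  induction x using Finsupp.induction_linear with
  | zero => rw [bsh_zero_left, bsh_zero_left, bsh_zero_left]
  | add a b ha hb => rw [bsh_add_left, bsh_add_left, bsh_add_left, ha, hb]
  | single u c =>
    induction y using Finsupp.induction_linear with
    | zero => simp [bsh_zero_left, bsh_zero_right]
    | add a b ha hb => rw [bsh_add_right, bsh_add_left, bsh_add_left, ha, hb, bsh_add_right]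
    | single v d =>
      induction z using Finsupp.induction_linear with
      | zero => simp [bsh_zero_left, bsh_zero_right]
      | add a b ha hb => rw [bsh_add_right, bsh_add_right, ha, hb, bsh_add_right]
      | single w e =>
        have hs : ∀ (t : List ℕ) (c : ℚ), (Finsupp.single t c : QB) = c • wB t := by
          intro t c; rw [wB, Finsupp.smul_single, smul_eq_mul, mul_one]
        simp only [hs, bsh_smul_left, bsh_smul_right, bsh_wB_wB]
        rw [bshW_assoc]

lemma bshW_replicate (n : ℕ) :
    bshW (List.replicate n 0) [0] = ((n : ℚ) + 1) • wB (List.replicate (n + 1) 0) := by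
  induction n with
  | zero => simp [bshW_nil_left]
  | succ n ih =>
      rw [List.replicate_succ, bshW_cons, ih, bshW_nil_right]
      simp only [show ¬(1 ≤ 0 ∧ 1 ≤ 0) from by omega, if_false, add_zero]
      rw [consB_smul, consB_wB, consB_wB, ← List.replicate_succ, ← List.replicate_succ,
        ← List.replicate_succ]
      push_cast
      module

lemma bpow_eq (n : ℕ) : bpow n = (n.factorial : ℚ) • wB (List.replicate n 0) := by
  induction n with
  | zero => simp [bpow]
  | succ n ih =>
      rw [bpow, ih, bsh_smul_left, bsh_wB_wB, bshW_replicate, Nat.factorial_succ,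
        smul_smul]
      push_cast
      ring_nf

lemma bpow_add (m n : ℕ) : bsh (bpow m) (bpow n) = bpow (m + n) := by
  induction n with
  | zero => rw [Nat.add_zero]; exact bsh_one_right (bpow m)
  | succ n ih => rw [show m + (n+1) = (m+n)+1 from rfl, bpow, bpow, ← bsh_assoc, ih]

lemma regT_zero : regT 0 = 0 := Finsupp.sum_zero_index

lemma regT_add (P Q : ℕ →₀ QB) : regT (P + Q) = regT P + regT Q := by
  unfold regT
  rw [Finsupp.sum_add_index]
  · intro n _; exact bsh_zero_left _
  · intro n _ x y; exact bsh_add_left x y _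

lemma regT_smul (c : ℚ) (P : ℕ →₀ QB) : regT (c • P) = c • regT P := by
  unfold regT
  rw [Finsupp.sum_smul_index' (h0 := fun n => bsh_zero_left (bpow n)), Finsupp.smul_sum]
  exact Finsupp.sum_congr fun n _ => bsh_smul_left c _ _

lemma regT_single (n : ℕ) (x : QB) : regT (Finsupp.single n x) = bsh x (bpow n) := by
  unfold regT
  exact Finsupp.sum_single_index (h := fun n x => bsh x (bpow n)) (bsh_zero_left (bpow n))

noncomputable def regTH : (ℕ →₀ QB) →+ QB := AddMonoidHom.mk' regT regT_add

lemma regT_finsupp_sum {α : Type} [Zero α] (S : ℕ →₀ α) (f : ℕ → α → (ℕ →₀ QB)) :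
    regT (S.sum f) = S.sum fun i x => regT (f i x) := map_sum regTH _ _

lemma bsh_exchange (x y pi pj : QB) :
    bsh (bsh x y) (bsh pi pj) = bsh (bsh x pi) (bsh y pj) := by
  rw [bsh_assoc x y, ← bsh_assoc y pi, bsh_comm y pi, bsh_assoc pi y, ← bsh_assoc x pi]

lemma regT_mult (P Q : ℕ →₀ QB) : regT (bshP P Q) = bsh (regT P) (regT Q) := by
  have hL : ∀ z : QB, ∀ (S : ℕ →₀ QB) (f : ℕ → QB → QB),
      bsh (S.sum f) z = S.sum fun i x => bsh (f i x) z := by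
    intro z S f
    exact map_sum (AddMonoidHom.mk' (fun t => bsh t z) (fun a b => bsh_add_left a b z)) _ _
  have hR : ∀ z : QB, ∀ (S : ℕ →₀ QB) (f : ℕ → QB → QB),
      bsh z (S.sum f) = S.sum fun i x => bsh z (f i x) := by
    intro z S f
    exact map_sum (AddMonoidHom.mk' (fun t => bsh z t) (fun a b => bsh_add_right z a b)) _ _
  unfold bshP
  rw [regT_finsupp_sum]
  rw [show regT P = P.sum fun i x => bsh x (bpow i) from rfl, hL]
  apply Finsupp.sum_congr
  intro i _
  rw [regT_finsupp_sum]
  rw [show regT Q = Q.sum fun j y => bsh y (bpow j) from rfl, hR]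
  apply Finsupp.sum_congr
  intro j _
  rw [regT_single, ← bpow_add, bsh_exchange]

/-! ### evaluation lemmas for injectivity -/

lemma E1 : ∀ (m : ℕ) (u : List ℕ), u.head? ≠ some 0 → ∀ (n : ℕ) (u' : List ℕ),
    u'.head? ≠ some 0 → m ≤ n →
    (bshW u (List.replicate m 0)) (List.replicate n 0 ++ u') =
      (if n = m ∧ u' = u then (1 : ℚ) else 0) := by
  intro m
  induction m with
  | zero =>
      intro u hu n u' hu' _
      rw [List.replicate_zero, bshW_nil_right, wB, Finsupp.single_apply]
      congr 1
      simp only [eq_iff_iff]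
      constructor
      · intro he
        cases n with
        | zero => simp at he; exact ⟨rfl, he.symm⟩
        | succ n' =>
            exfalso
            rw [List.replicate_succ, List.cons_append] at he
            rw [he] at hu
            exact hu rfl
      · rintro ⟨rfl, rfl⟩; simp
  | succ m ih =>
      intro u hu n u' hu' hmn
      cases n with
      | zero => omega
      | succ n' =>
          have hn' : m ≤ n' := by omega
          rw [show List.replicate (n' + 1) 0 = 0 :: List.replicate n' 0 from rfl, List.cons_append]
          cases u with
          | nil =>
              rw [bshW_nil_left, wB, Finsupp.single_apply]
              congr 1
              simp only [eq_iff_iff]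
              constructor
              · intro he
                rw [List.replicate_succ] at he
                injection he with _ he'
                have hlen := congrArg List.length he'
                rw [List.length_replicate, List.length_append, List.length_replicate] at hlen
                have hu0 : u' = [] := List.eq_nil_of_length_eq_zero (by omega)
                exact ⟨by subst hu0; simp at hlen; omega, hu0⟩
              · rintro ⟨h1, rfl⟩
                have : n' = m := by omega
                subst this
                rw [List.replicate_succ, List.append_nil]
          | cons i u₀ =>
              have hi : i ≠ 0 := fun h => hu (by simp [h])
              rw [List.replicate_succ, bshW_cons]
              rw [Finsupp.add_apply, Finsupp.add_apply]
              rw [consB_apply_cons_ne i 0 hi, consB_apply_cons]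
              rw [if_neg (by omega), Finsupp.coe_zero, Pi.zero_apply]
              rw [ih (i :: u₀) hu n' u' hu' hn']
              simp only [zero_add, add_zero]
              congr 1
              simp only [eq_iff_iff]
              constructor <;> (rintro ⟨h1, h2⟩; exact ⟨by omega, h2⟩)

lemma wB_mem_QB0 {u : List ℕ} (hu : u.head? ≠ some 0) : wB u ∈ QB0 :=
  Submodule.subset_span ⟨u, hu, rfl⟩

lemma bsh_bpow_apply {x : QB} (hx : x ∈ QB0) :
    ∀ (m n : ℕ), m ≤ n → ∀ (u' : List ℕ), u'.head? ≠ some 0 →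
    (bsh x (bpow m)) (List.replicate n 0 ++ u') =
      (if n = m then (m.factorial : ℚ) * x u' else 0) := by
  induction hx using Submodule.span_induction with
  | mem y hy =>
      obtain ⟨u, hu, rfl⟩ := hy
      intro m n hmn u' hu'
      rw [bpow_eq, bsh_smul_right, bsh_wB_wB, Finsupp.smul_apply,
        E1 m u hu n u' hu' hmn, wB, Finsupp.single_apply]
      by_cases h1 : n = m
      · by_cases h2 : u' = u
        · subst h2; simp [h1]
        · rw [if_neg (fun h : n = m ∧ u' = u => h2 h.2), smul_zero, if_pos h1,
            if_neg (fun h : u = u' => h2 h.symm), mul_zero]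
      · rw [if_neg (fun h : n = m ∧ u' = u => h1 h.1), smul_zero, if_neg h1]
  | zero => intro m n _ u' _; simp [bsh_zero_left]
  | add y z _ _ hy hz =>
      intro m n hmn u' hu'
      rw [bsh_add_left, Finsupp.add_apply, hy m n hmn u' hu', hz m n hmn u' hu',
        Finsupp.add_apply]
      split_ifs <;> ring_nf <;> simp [mul_add]
  | smul c y _ hy =>
      intro m n hmn u' hu'
      rw [bsh_smul_left, Finsupp.smul_apply, hy m n hmn u' hu', Finsupp.smul_apply]
      split_ifs <;> simp <;> ring

lemma QB0_apply_zero {x : QB} (hx : x ∈ QB0) : ∀ w : List ℕ, w.head? = some 0 → x w = 0 := by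
  induction hx using Submodule.span_induction with
  | mem y hy =>
      obtain ⟨u, hu, rfl⟩ := hy
      intro w hw
      rw [wB, Finsupp.single_apply, if_neg]
      intro h; rw [h] at hu; exact hu hw
  | zero => intro w _; simp
  | add y z _ _ hy hz => intro w hw; rw [Finsupp.add_apply, hy w hw, hz w hw, add_zero]
  | smul c y _ hy => intro w hw; rw [Finsupp.smul_apply, hy w hw, smul_zero]

lemma regT_injective_zero {P : ℕ →₀ QB} (hP : ∀ n, P n ∈ QB0) (h : regT P = 0) : P = 0 := by
  by_contra hne
  have hs : P.support.Nonempty := Finsupp.support_nonempty_iff.mpr hne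
  set n := P.support.max' hs with hn
  have hmem : n ∈ P.support := P.support.max'_mem hs
  have hmax : ∀ m ∈ P.support, m ≤ n := fun m hm => Finset.le_max' _ m hm
  have key : ∀ u' : List ℕ, u'.head? ≠ some 0 → P n u' = 0 := by
    intro u' hu'
    have h0 : (regT P) (List.replicate n 0 ++ u') = 0 := by rw [h]; rfl
    rw [regT, Finsupp.sum_apply] at h0
    rw [Finsupp.sum, Finset.sum_eq_single_of_mem n hmem] at h0
    · rw [bsh_bpow_apply (hP n) n n le_rfl u' hu', if_pos rfl] at h0
      have : (n.factorial : ℚ) ≠ 0 := Nat.cast_ne_zero.mpr (Nat.factorial_ne_zero n)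
      exact (mul_eq_zero.mp h0).resolve_left this
    · intro m hm hmn
      rw [bsh_bpow_apply (hP m) m n (hmax m hm) u' hu', if_neg (fun hh => hmn hh.symm)]
  have hPn : P n = 0 := by
    ext w
    by_cases hw : w.head? = some 0
    · exact QB0_apply_zero (hP n) w hw
    · exact key w hw
  exact Finsupp.mem_support_iff.mp hmem hPn

/-! ### surjectivity -/

def LZ : List ℕ → ℕ
  | [] => 0
  | a :: w => if a = 0 then LZ w + 1 else 0

lemma LZ_split : ∀ w : List ℕ, ∃ u : List ℕ, w = List.replicate (LZ w) 0 ++ u ∧ u.head? ≠ some 0 := by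
  intro w
  induction w with
  | nil => exact ⟨[], by simp [LZ]⟩
  | cons a t ih =>
      by_cases ha : a = 0
      · obtain ⟨u, hu, hu2⟩ := ih
        subst ha
        exact ⟨u, by rw [LZ, if_pos rfl, List.replicate_succ, List.cons_append, ← hu], hu2⟩
      · exact ⟨a :: t, by simp [LZ, ha], by simp [ha]⟩

lemma LZ_rep (k : ℕ) (u : List ℕ) (hu : u.head? ≠ some 0) :
    LZ (List.replicate k 0 ++ u) = k := by
  induction k with
  | zero =>
      cases u with
      | nil => rfl
      | cons a t =>
          have : a ≠ 0 := fun h => hu (by simp [h])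
          simp [LZ, this]
  | succ k ih => rw [List.replicate_succ, List.cons_append, LZ, if_pos rfl, ih]

lemma LZ_zero_head {w : List ℕ} (h : LZ w = 0) : w.head? ≠ some 0 := by
  cases w with
  | nil => simp
  | cons a t =>
      intro hh
      simp at hh
      rw [LZ, if_pos hh] at h
      omega

lemma single_mem_QB0 {x : QB} (hx : x ∈ QB0) (n m : ℕ) : (Finsupp.single n x) m ∈ QB0 := by
  rw [Finsupp.single_apply]
  split_ifs
  · exact hx
  · exact zero_mem _

noncomputable def Rsub : Submodule ℚ QB where
  carrier := {y | ∃ P : ℕ →₀ QB, (∀ n, P n ∈ QB0) ∧ regT P = y}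
  zero_mem' := ⟨0, fun n => by simp, regT_zero⟩
  add_mem' := by
    rintro a b ⟨P, hP, rfl⟩ ⟨Q, hQ, rfl⟩
    exact ⟨P + Q, fun n => by rw [Finsupp.add_apply]; exact add_mem (hP n) (hQ n),
      regT_add P Q⟩
  smul_mem' := by
    rintro c a ⟨P, hP, rfl⟩
    exact ⟨c • P, fun n => by rw [Finsupp.smul_apply]; exact Submodule.smul_mem _ c (hP n),
      regT_smul c P⟩

lemma remainder_apply {u : List ℕ} (hu : u.head? ≠ some 0) (k : ℕ) :
    ∀ w : List ℕ, k ≤ LZ w →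
      (bsh (wB u) (bpow k) - (k.factorial : ℚ) • wB (List.replicate k 0 ++ u)) w = 0 := by
  intro w hw
  obtain ⟨u'', hsplit, hu''⟩ := LZ_split w
  have hA : (bsh (wB u) (bpow k)) w =
      (if LZ w = k then (k.factorial : ℚ) * (wB u) u'' else 0) := by
    conv_lhs => rw [hsplit]
    exact bsh_bpow_apply (wB_mem_QB0 hu) k (LZ w) hw u'' hu''
  have hB : (wB (List.replicate k 0 ++ u)) w = (if LZ w = k ∧ u'' = u then (1:ℚ) else 0) := by
    rw [wB, Finsupp.single_apply]
    by_cases hc : LZ w = k ∧ u'' = u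
    · rw [if_pos _, if_pos hc]
      rw [hsplit, hc.1, hc.2]
    · rw [if_neg _, if_neg hc]
      intro he
      apply hc
      have h1 : LZ w = k := by
        rw [← he, LZ_rep k u hu]
      refine ⟨h1, ?_⟩
      rw [hsplit, h1] at he
      exact (List.append_cancel_left he).symm
  rw [Finsupp.sub_apply, Finsupp.smul_apply, hA, hB]
  by_cases h1 : LZ w = k
  · by_cases h2 : u'' = u
    · rw [if_pos h1, if_pos ⟨h1, h2⟩, h2, wB, Finsupp.single_apply, if_pos rfl]
      simp
    · rw [if_pos h1, if_neg (fun h => h2 h.2), wB, Finsupp.single_apply,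
        if_neg (fun h => h2 h.symm)]
      simp
  · rw [if_neg h1, if_neg (fun h => h1 h.1)]
    simp

lemma mem_of_bound {k : ℕ} (h : ∀ w : List ℕ, LZ w ≤ k → wB w ∈ Rsub) {x : QB}
    (hx : ∀ w ∈ x.support, LZ w ≤ k) : x ∈ Rsub := by
  have hrep : x = x.sum fun w c => c • wB w := by
    have : ∀ (w : List ℕ) (c : ℚ), c • wB w = Finsupp.single w c := by
      intro w c; rw [wB, Finsupp.smul_single, smul_eq_mul, mul_one]
    rw [Finsupp.sum_congr fun w _ => this w (x w), Finsupp.sum_single]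
  rw [hrep]
  exact Submodule.sum_mem _ fun w hw => Submodule.smul_mem _ _ (h w (hx w hw))

lemma surjW : ∀ k : ℕ, ∀ w : List ℕ, LZ w ≤ k → wB w ∈ Rsub := by
  intro k
  induction k with
  | zero =>
      intro w hw
      have hw0 : w.head? ≠ some 0 := LZ_zero_head (by omega)
      exact ⟨Finsupp.single 0 (wB w), fun m => single_mem_QB0 (wB_mem_QB0 hw0) 0 m,
        by rw [regT_single, show bpow 0 = wB [] from rfl, bsh_one_right]⟩
  | succ k ih =>
      intro w hw
      by_cases hk : LZ w ≤ k
      · exact ih w hk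
      · have hk1 : LZ w = k + 1 := by omega
        obtain ⟨u, hsplit, hu⟩ := LZ_split w
        rw [hk1] at hsplit
        set y : QB := bsh (wB u) (bpow (k + 1)) -
          ((k + 1).factorial : ℚ) • wB (List.replicate (k + 1) 0 ++ u) with hy
        have hymem : y ∈ Rsub := by
          apply mem_of_bound ih
          intro w' hw'
          by_contra hc
          exact Finsupp.mem_support_iff.mp hw' (remainder_apply hu (k + 1) w' (by omega))
        have hbshmem : bsh (wB u) (bpow (k + 1)) ∈ Rsub :=
          ⟨Finsupp.single (k + 1) (wB u),
            fun m => single_mem_QB0 (wB_mem_QB0 hu) (k + 1) m, regT_single _ _⟩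
        have heq : wB w = (((k + 1).factorial : ℚ))⁻¹ • (bsh (wB u) (bpow (k + 1)) - y) := by
          rw [hy, sub_sub_cancel, ← hsplit, smul_smul, inv_mul_cancel₀
            (Nat.cast_ne_zero.mpr (Nat.factorial_ne_zero (k + 1))), one_smul]
        rw [heq]
        exact Submodule.smul_mem _ _ (Submodule.sub_mem _ hbshmem hymem)

/-- `reg_T : ℚ⟨B⟩⁰[T] → ℚ⟨B⟩` is bijective, it is multiplicative for
the balanced quasi-shuffle product `∗_b`, and it sends `𝟏` to `𝟏`. -/
theorem regT_algebra_isomorphism :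
    Function.Bijective (fun P : {P : ℕ →₀ QB // ∀ n, P n ∈ QB0} => regT P.1) ∧
    (∀ P Q : ℕ →₀ QB, (∀ n, P n ∈ QB0) → (∀ n, Q n ∈ QB0) →
      regT (bshP P Q) = bsh (regT P) (regT Q)) ∧
    regT (Finsupp.single 0 (wB [])) = wB [] := by
  refine ⟨⟨?_, ?_⟩, fun P Q _ _ => regT_mult P Q, ?_⟩
  · rintro ⟨P, hP⟩ ⟨Q, hQ⟩ h
    simp only at h
    have hsub : regT (P - Q) = 0 := by
      have hmapsub : regT (P - Q) = regT P - regT Q := map_sub regTH P Q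
      rw [hmapsub, h, sub_self]
    have h0 : P - Q = 0 := regT_injective_zero
      (fun n => by rw [Finsupp.sub_apply]; exact sub_mem (hP n) (hQ n)) hsub
    exact Subtype.ext (sub_eq_zero.mp h0)
  · intro y
    have hy : y ∈ Rsub :=
      mem_of_bound (surjW (y.support.sup LZ)) (fun w hw => Finset.le_sup hw)
    obtain ⟨P, hP, hPy⟩ := hy
    exact ⟨⟨P, hP⟩, hPy⟩
  · rw [regT_single, show bpow 0 = wB [] from rfl, bsh_one_right]
end

section
/- The ℚ-vector space Z_q ⊆ ℚ⟦q⟧, spanned by 1 together with all generic multiple q-zeta values ζ_q(s₁,…,s_l;R₁,…,R_l) with l ≥ 1, s₁ ≥ 1, s₂,…,s_l ≥ 0, R₁ ∈ tℚ[t], R₂,…,R_l ∈ ℚ[t] and deg(R_j) ≤ s_j for all j, is closed under the multiplication of ℚ⟦q⟧; i.e. Z_q is a ℚ-subalgebra of ℚ⟦q⟧. -/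
/-!
Truncating the outer index at `N` turns a generic multiple q-zeta value into a nested sum over
`N ≥ n₁ > ⋯ > n_l ≥ 1`. A product of two nested sums with the same bound splits, according to
whether `n₁ > m₁`, `n₁ < m₁` or `n₁ = m₁`, into nested sums indexed by the quasi-shuffles of the
two index words, where coinciding letters merge to `(s + s', R R')` since
`R(qⁿ)/(1-qⁿ)^s · R'(qⁿ)/(1-qⁿ)^s' = (RR')(qⁿ)/(1-qⁿ)^(s+s')`.
Because `R₁(0) = 0`, the summand with outer index `n` is divisible by `qⁿ`, so the coefficient
of `q^k` is already exact at `N = k`; hence the product of two generators is the sum of the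
generators indexed by their quasi-shuffles, and these words again satisfy `s₁ ≥ 1`,
`R₁(0) = 0` and `deg R_j ≤ s_j`.
-/

open PowerSeries

/-- The single factor `R(q^n)/(1-q^n)^s ∈ ℚ⟦q⟧`. -/
noncomputable def qterm (s : ℕ) (R : Polynomial ℚ) (n : ℕ) : PowerSeries ℚ :=
  Polynomial.eval₂ (PowerSeries.C : ℚ →+* PowerSeries ℚ) (PowerSeries.X ^ n) R *
    ((1 - PowerSeries.X ^ n)⁻¹) ^ s

/-- The generic multiple q-zeta value
`ζ_q(s₁,…,s_l;R₁,…,R_l) = ∑_{n₁>⋯>n_l>0} ∏ R_i(q^{n_i})/(1-q^{n_i})^{s_i} ∈ ℚ⟦q⟧`,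
the (outer) index `0 : Fin l` corresponding to `n₁ > n₂ > ⋯`. -/
noncomputable def zqGen (l : ℕ) (s : Fin l → ℕ) (R : Fin l → Polynomial ℚ) :
    PowerSeries ℚ :=
  PowerSeries.mk fun N =>
    PowerSeries.coeff N
      (∑ n ∈ (Fintype.piFinset fun _ : Fin l => Finset.Icc 1 N).filter
          (fun n => ∀ i j : Fin l, i < j → n j < n i),
        ∏ i : Fin l, qterm (s i) (R i) (n i))

/-- The space `Z_q`: the `ℚ`-span of `1` together with all generic multiple q-zeta
values `ζ_q(s₁,…,s_l;R₁,…,R_l)` with `l ≥ 1`, `s₁ ≥ 1`, `R₁ ∈ tℚ[t]` and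
`deg(R_j) ≤ s_j` for all `j`. -/
noncomputable def Zq : Submodule ℚ (PowerSeries ℚ) :=
  Submodule.span ℚ
    {f : PowerSeries ℚ |
      f = 1 ∨
      ∃ (l : ℕ) (s : Fin (l + 1) → ℕ) (R : Fin (l + 1) → Polynomial ℚ),
        1 ≤ s 0 ∧ (R 0).coeff 0 = 0 ∧ (∀ j, (R j).natDegree ≤ s j) ∧
        f = zqGen (l + 1) s R}

open scoped Polynomial

section NestedSum

variable {α A : Type*} [CommSemiring A]

def quasiShuffle (op : α → α → α) : List α → List α → List (List α)
  | [], ys => [ys]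
  | x :: xs, [] => [x :: xs]
  | x :: xs, y :: ys =>
      (quasiShuffle op xs (y :: ys)).map (x :: ·) ++ (quasiShuffle op (x :: xs) ys).map (y :: ·) ++
        (quasiShuffle op xs ys).map (op x y :: ·)

theorem exists_cons_of_mem_quasiShuffle {op : α → α → α} {x y : α} {xs ys w : List α}
    (hw : w ∈ quasiShuffle op (x :: xs) (y :: ys)) :
    ∃ a w', w = a :: w' ∧ (a = x ∨ a = y ∨ a = op x y) := by
  simp only [quasiShuffle, List.mem_append, List.mem_map] at hw
  rcases hw with (⟨w', -, rfl⟩ | ⟨w', -, rfl⟩) | ⟨w', -, rfl⟩ <;> simp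

theorem forall_mem_of_mem_quasiShuffle {op : α → α → α} {P : α → Prop}
    (hP : ∀ a b, P a → P b → P (op a b)) {xs ys w : List α} (hxs : ∀ a ∈ xs, P a)
    (hys : ∀ a ∈ ys, P a) (hw : w ∈ quasiShuffle op xs ys) : ∀ a ∈ w, P a := by
  induction xs, ys using quasiShuffle.induct generalizing w with
  | case1 ys => simp_all [quasiShuffle]
  | case2 x xs => simp_all [quasiShuffle]
  | case3 x xs y ys ih₁ ih₂ ih₃ =>
    simp only [List.forall_mem_cons] at hxs hys
    simp only [quasiShuffle, List.mem_append, List.mem_map] at hw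
    rcases hw with (⟨w', hw', rfl⟩ | ⟨w', hw', rfl⟩) | ⟨w', hw', rfl⟩ <;>
      simp only [List.forall_mem_cons]
    · exact ⟨hxs.1, ih₁ hxs.2 (List.forall_mem_cons.2 hys) hw'⟩
    · exact ⟨hys.1, ih₂ (List.forall_mem_cons.2 hxs) hys.2 hw'⟩
    · exact ⟨hP x y hxs.1 hys.1, ih₃ hxs.2 hys.2 hw'⟩

-- `nestedSum f [x₁, …, x_l] N = ∑_{N ≥ n₁ > ⋯ > n_l ≥ 1} f x₁ n₁ ⋯ f x_l n_l`
def nestedSum (f : α → ℕ → A) : List α → ℕ → A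
  | [], _ => 1
  | x :: xs, N => ∑ n ∈ Finset.Icc 1 N, f x n * nestedSum f xs (n - 1)

theorem sum_Icc_mul_sum_Icc (F G : ℕ → A) (N : ℕ) :
    (∑ a ∈ Finset.Icc 1 N, F a) * (∑ b ∈ Finset.Icc 1 N, G b) =
      ∑ a ∈ Finset.Icc 1 N, F a * ∑ b ∈ Finset.Icc 1 (a - 1), G b +
        ∑ b ∈ Finset.Icc 1 N, (∑ a ∈ Finset.Icc 1 (b - 1), F a) * G b +
        ∑ a ∈ Finset.Icc 1 N, F a * G a := by
  induction N with
  | zero => simp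
  | succ N ih =>
    simp only [Finset.sum_Icc_succ_top (Nat.le_add_left 1 N), Nat.add_sub_cancel, add_mul,
      mul_add, ih]
    ring

theorem sum_Icc_mul_sum_map_nestedSum (f : α → ℕ → A) (x : α) (ws : List (List α)) (N : ℕ) :
    ∑ n ∈ Finset.Icc 1 N, f x n * (ws.map (nestedSum f · (n - 1))).sum =
      ((ws.map (x :: ·)).map (nestedSum f · N)).sum := by
  induction ws with
  | nil => simp
  | cons w ws ih => simp [nestedSum, mul_add, Finset.sum_add_distrib, ih]

theorem nestedSum_mul_nestedSum {op : α → α → α} {f : α → ℕ → A}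
    (hf : ∀ a b n, f (op a b) n = f a n * f b n) (xs ys : List α) (N : ℕ) :
    nestedSum f xs N * nestedSum f ys N = ((quasiShuffle op xs ys).map (nestedSum f · N)).sum := by
  induction xs, ys using quasiShuffle.induct generalizing N with
  | case1 ys => simp [quasiShuffle, nestedSum]
  | case2 x xs => simp [quasiShuffle, nestedSum]
  | case3 x xs y ys ih₁ ih₂ ih₃ =>
    simp only [quasiShuffle, List.map_append, List.sum_append, ← sum_Icc_mul_sum_map_nestedSum,
      ← ih₁, ← ih₂, ← ih₃]
    rw [nestedSum, nestedSum, sum_Icc_mul_sum_Icc]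
    simp only [nestedSum, hf]
    congr 1; congr 1
    all_goals exact Finset.sum_congr rfl fun _ _ => by ring

def decreasingTuples (l N : ℕ) : Finset (Fin l → ℕ) :=
  (Fintype.piFinset fun _ => Finset.Icc 1 N).filter (fun n => ∀ i j : Fin l, i < j → n j < n i)

theorem cons_mem_decreasingTuples_iff {l N a : ℕ} {m : Fin l → ℕ} :
    (Fin.cons a m : Fin (l + 1) → ℕ) ∈ decreasingTuples (l + 1) N ↔
      a ∈ Finset.Icc 1 N ∧ m ∈ decreasingTuples l (a - 1) := by
  simp only [decreasingTuples, Finset.mem_filter, Fintype.mem_piFinset, Finset.mem_Icc,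
    Fin.forall_fin_succ, Fin.cons_zero, Fin.cons_succ, Fin.succ_lt_succ_iff, Fin.not_lt_zero,
    Fin.succ_pos, false_imp_iff, true_imp_iff, true_and]
  constructor
  · rintro ⟨⟨ha, hm⟩, hlt, hanti⟩
    exact ⟨ha, fun i => ⟨(hm i).1, Nat.le_sub_one_of_lt (hlt i)⟩, hanti⟩
  · rintro ⟨ha, hm, hanti⟩
    exact ⟨⟨ha, fun i => ⟨(hm i).1, by have := hm i; omega⟩⟩,
      fun i => by have := hm i; omega, hanti⟩

theorem nestedSum_ofFn (f : α → ℕ → A) {l : ℕ} (w : Fin l → α) (N : ℕ) :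
    nestedSum f (List.ofFn w) N = ∑ n ∈ decreasingTuples l N, ∏ i, f (w i) (n i) := by
  induction l generalizing N with
  | zero => simp [nestedSum, decreasingTuples]
  | succ l ih =>
    rw [List.ofFn_succ, nestedSum]
    simp only [ih, Finset.mul_sum]
    rw [Finset.sum_sigma']
    refine Finset.sum_nbij' (fun p => Fin.cons p.1 p.2) (fun n => ⟨n 0, Fin.tail n⟩)
      (fun p hp => cons_mem_decreasingTuples_iff.2 (Finset.mem_sigma.1 hp)) (fun n hn => ?_)
      (fun p _ => by simp) (fun n _ => Fin.cons_self_tail n) (fun p _ => ?_)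
    · rw [← Fin.cons_self_tail n, cons_mem_decreasingTuples_iff] at hn
      exact Finset.mem_sigma.2 hn
    · simp [Fin.prod_univ_succ]

end NestedSum

noncomputable def letterMul (p q : ℕ × ℚ[X]) : ℕ × ℚ[X] := (p.1 + q.1, p.2 * q.2)

theorem qterm_letterMul (p q : ℕ × ℚ[X]) (n : ℕ) :
    qterm (letterMul p q).1 (letterMul p q).2 n = qterm p.1 p.2 n * qterm q.1 q.2 n := by
  simp only [letterMul, qterm, Polynomial.eval₂_mul, pow_add]
  ring

theorem X_pow_dvd_qterm {R : ℚ[X]} (hR : R.coeff 0 = 0) (s n : ℕ) : X ^ n ∣ qterm s R n := by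
  obtain ⟨S, rfl⟩ := Polynomial.X_dvd_iff.2 hR
  exact Dvd.intro (S.eval₂ C (X ^ n) * (1 - X ^ n)⁻¹ ^ s) (by simp [qterm, mul_assoc])

theorem coeff_nestedSum_cons_of_le {p : ℕ × ℚ[X]} (hp : p.2.coeff 0 = 0) (L : List (ℕ × ℚ[X]))
    {k N : ℕ} (hkN : k ≤ N) :
    coeff k (nestedSum (Function.uncurry qterm) (p :: L) N) =
      coeff k (nestedSum (Function.uncurry qterm) (p :: L) k) := by
  simp only [nestedSum, map_sum]
  refine (Finset.sum_subset (Finset.Icc_subset_Icc_right hkN) fun n hn hnk => ?_).symm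
  have hkn : k < n := by simp only [Finset.mem_Icc, not_and, not_le] at hn hnk; exact hnk hn.1
  exact X_pow_dvd_iff.1 ((X_pow_dvd_qterm hp p.1 n).mul_right _) k hkn

noncomputable def zqList (L : List (ℕ × ℚ[X])) : ℚ⟦X⟧ :=
  mk fun N => coeff N (nestedSum (Function.uncurry qterm) L N)

theorem zqGen_eq_zqList (l : ℕ) (s : Fin l → ℕ) (R : Fin l → ℚ[X]) :
    zqGen l s R = zqList (List.ofFn fun i => (s i, R i)) := by
  simp only [zqList, nestedSum_ofFn]
  rfl

theorem zqList_cons_mul_zqList_cons {x y : ℕ × ℚ[X]} (hx : x.2.coeff 0 = 0)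
    (hy : y.2.coeff 0 = 0) (xs ys : List (ℕ × ℚ[X])) :
    zqList (x :: xs) * zqList (y :: ys) =
      ((quasiShuffle letterMul (x :: xs) (y :: ys)).map zqList).sum := by
  ext N
  have htrunc : ∀ p ∈ Finset.HasAntidiagonal.antidiagonal N,
      coeff p.1 (zqList (x :: xs)) * coeff p.2 (zqList (y :: ys)) =
        coeff p.1 (nestedSum (Function.uncurry qterm) (x :: xs) N) *
          coeff p.2 (nestedSum (Function.uncurry qterm) (y :: ys) N) := by
    intro p hp
    have hN := Finset.HasAntidiagonal.mem_antidiagonal.1 hp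
    rw [zqList, zqList, coeff_mk, coeff_mk, coeff_nestedSum_cons_of_le hx xs (by omega : p.1 ≤ N),
      coeff_nestedSum_cons_of_le hy ys (by omega : p.2 ≤ N)]
  rw [coeff_mul, Finset.sum_congr rfl htrunc, ← coeff_mul,
    nestedSum_mul_nestedSum qterm_letterMul, map_list_sum, map_list_sum,
    List.map_map, List.map_map]
  simp only [Function.comp_def, zqList, coeff_mk]

def IsAdmissible : List (ℕ × ℚ[X]) → Prop
  | [] => False
  | p :: L => 1 ≤ p.1 ∧ p.2.coeff 0 = 0 ∧ ∀ q ∈ p :: L, q.2.natDegree ≤ q.1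

theorem isAdmissible_ofFn_iff {l : ℕ} {s : Fin (l + 1) → ℕ} {R : Fin (l + 1) → ℚ[X]} :
    IsAdmissible (List.ofFn fun i => (s i, R i)) ↔
      1 ≤ s 0 ∧ (R 0).coeff 0 = 0 ∧ ∀ j, (R j).natDegree ≤ s j := by
  simp [List.ofFn_succ, IsAdmissible, Fin.forall_fin_succ]

theorem IsAdmissible.of_mem_quasiShuffle {xs ys w : List (ℕ × ℚ[X])} (hxs : IsAdmissible xs)
    (hys : IsAdmissible ys) (hw : w ∈ quasiShuffle letterMul xs ys) : IsAdmissible w := by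
  cases xs with
  | nil => exact hxs.elim
  | cons x xs =>
  cases ys with
  | nil => exact hys.elim
  | cons y ys =>
  have hdeg : ∀ q ∈ w, q.2.natDegree ≤ q.1 :=
    forall_mem_of_mem_quasiShuffle (P := fun q => q.2.natDegree ≤ q.1)
      (fun p q hp hq => Polynomial.natDegree_mul_le.trans (add_le_add hp hq)) hxs.2.2 hys.2.2 hw
  obtain ⟨a, w, rfl, rfl | rfl | rfl⟩ := exists_cons_of_mem_quasiShuffle hw
  · exact ⟨hxs.1, hxs.2.1, hdeg⟩
  · exact ⟨hys.1, hys.2.1, hdeg⟩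
  · exact ⟨le_add_right hxs.1, by simp [letterMul, Polynomial.mul_coeff_zero, hxs.2.1], hdeg⟩

theorem Zq_eq_span_zqList :
    Zq = Submodule.span ℚ (insert 1 (zqList '' {L | IsAdmissible L})) := by
  rw [Zq]
  congr 1
  ext f
  refine or_congr_right ⟨?_, ?_⟩
  · rintro ⟨l, s, R, hs, hR, hdeg, rfl⟩
    exact ⟨_, isAdmissible_ofFn_iff.2 ⟨hs, hR, hdeg⟩, (zqGen_eq_zqList (l + 1) s R).symm⟩
  · rintro ⟨_ | ⟨p, L⟩, hL, rfl⟩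
    · exact hL.elim
    have hofFn : List.ofFn (fun i => (((p :: L).get i).1, ((p :: L).get i).2)) = p :: L := by
      simp
    obtain ⟨hs, hR, hdeg⟩ := isAdmissible_ofFn_iff.1 (hofFn ▸ hL)
    exact ⟨L.length, _, _, hs, hR, hdeg, by rw [zqGen_eq_zqList]; exact congrArg zqList hofFn.symm⟩

theorem zqList_mul_zqList_mem_Zq {xs ys : List (ℕ × ℚ[X])} (hxs : IsAdmissible xs)
    (hys : IsAdmissible ys) : zqList xs * zqList ys ∈ Zq := by
  cases xs with
  | nil => exact hxs.elim
  | cons x xs =>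
  cases ys with
  | nil => exact hys.elim
  | cons y ys =>
  rw [zqList_cons_mul_zqList_cons hxs.2.1 hys.2.1 xs ys, Zq_eq_span_zqList]
  refine list_sum_mem fun f hf => ?_
  obtain ⟨w, hw, rfl⟩ := List.mem_map.1 hf
  exact Submodule.subset_span (Or.inr ⟨w, hxs.of_mem_quasiShuffle hys hw, rfl⟩)

/-- `Z_q` is closed under the multiplication of `ℚ⟦q⟧`. -/
theorem Zq_mul_closed : ∀ x y : PowerSeries ℚ, x ∈ Zq → y ∈ Zq → x * y ∈ Zq := by
  intro x y hx hy
  suffices Zq * Zq ≤ Zq from this (Submodule.mul_mem_mul hx hy)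
  have hgen : insert 1 (zqList '' {L | IsAdmissible L}) ⊆ (Zq : Set ℚ⟦X⟧) :=
    Zq_eq_span_zqList ▸ Submodule.subset_span
  rw [Zq_eq_span_zqList, Submodule.span_mul_span, Submodule.span_le, ← Zq_eq_span_zqList]
  rintro _ ⟨f, hf, g, hg, rfl⟩
  obtain rfl | ⟨xs, hxs, rfl⟩ := hf
  · simpa using hgen hg
  obtain rfl | ⟨ys, hys, rfl⟩ := hg
  · simpa using hgen (Or.inr ⟨xs, hxs, rfl⟩)
  exact zqList_mul_zqList_mem_Zq hxs hys
end
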